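/- arXiv:1701.00605 — 5 statements merged into one kernel-verified Lean document; each statement's English description precedes it below -/
import Mathlib

section
/- Let G be a finite group acting on the right by automorphisms on a finite abelian group (V,+). Then the number of orbits of G on V equals the number of orbits of G on the set V̂ = Hom((V,+), ℂ*) of linear characters of V, where G acts on V̂ by (τ.g)(v) = τ(v.g⁻¹) for τ ∈ V̂, g ∈ G, v ∈ V. -/
/-!
By Burnside's lemma it suffices that every `g` fixes as many characters as vectors. A character
`τ` is fixed by an automorphism `φ` exactly when it is trivial on the image of `φ - 1`, so the
fixed characters are the characters of the cokernel of `φ - 1`. A finite abelian group has as many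
complex characters as elements, and the cokernel of an endomorphism of a finite group is as large
as its kernel, which consists of the vectors fixed by `φ`.
-/

open Function MulAction

namespace AddChar

def unitsEquiv {A : Type*} [AddGroup A] (M : Type*) [CommMonoid M] :
    AddChar A Mˣ ≃ AddChar A M :=
  toMonoidHomEquiv.trans <| MonoidHom.toHomUnitsMulEquiv.symm.toEquiv.trans toMonoidHomEquiv.symm

variable {A : Type*} [AddCommGroup A]

instance [Finite A] : Finite (AddChar A ℂˣ) := .of_equiv _ (unitsEquiv ℂ).symm

lemma natCard_complexUnits_eq [Finite A] : Nat.card (AddChar A ℂˣ) = Nat.card A := by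
  cases nonempty_fintype A
  rw [Nat.card_congr (unitsEquiv ℂ), Nat.card_eq_fintype_card, Nat.card_eq_fintype_card, card_eq]

noncomputable def trivialOnEquiv {M : Type*} [CommGroup M] (W : AddSubgroup A) :
    {ψ : AddChar A M // ∀ w ∈ W, ψ w = 1} ≃ AddChar (A ⧸ W) M :=
  (toAddMonoidHomEquiv.subtypeEquiv fun ψ => by
      simp [QuotientAddGroup.ker_mk', SetLike.le_def, toAddMonoidHomEquiv]).trans <|
    ((QuotientAddGroup.mk' W).liftOfSurjective (QuotientAddGroup.mk'_surjective W)).trans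
      toAddMonoidHomEquiv.symm

lemma card_fixedPoints_compAddMonoidHom [Finite A] (f : A →+ A) :
    Nat.card (fixedPoints fun ψ : AddChar A ℂˣ => ψ.compAddMonoidHom f) =
      Nat.card (fixedPoints f) := by
  set W := (f - AddMonoidHom.id A).range
  have isFixedPt_iff (ψ : AddChar A ℂˣ) :
      IsFixedPt (·.compAddMonoidHom f) ψ ↔ ∀ w ∈ W, ψ w = 1 := by
    simp [W, IsFixedPt, DFunLike.ext_iff, map_sub_eq_div, div_eq_one]
  calc Nat.card (fixedPoints fun ψ : AddChar A ℂˣ => ψ.compAddMonoidHom f)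
      = Nat.card {ψ : AddChar A ℂˣ // ∀ w ∈ W, ψ w = 1} :=
        Nat.card_congr (.subtypeEquivRight isFixedPt_iff)
    _ = Nat.card (A ⧸ W) := by rw [Nat.card_congr (trivialOnEquiv W), natCard_complexUnits_eq]
    _ = Nat.card (f - AddMonoidHom.id A).ker := by
      rw [← AddSubgroup.index_eq_card, AddSubgroup.index_range]
    _ = Nat.card (fixedPoints f) := Nat.card_congr <| .subtypeEquivRight fun a => by
      simp [IsFixedPt, sub_eq_zero]

end AddChar

namespace MulAction

lemma card_quot_exists_smul_eq (G X : Type*) [Group G] [MulAction G X] :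
    Nat.card (Quot fun x y : X => ∃ g : G, g • x = y) = Nat.card (orbitRel.Quotient G X) :=
  Nat.card_congr <| Quot.congrRight fun x y => by rw [orbitRel_apply, mem_orbit_symm]; rfl

lemma sum_natCard_fixedBy (G X : Type*) [Group G] [Fintype G] [MulAction G X] [Finite X] :
    ∑ g : G, Nat.card (fixedBy X g) = Nat.card (orbitRel.Quotient G X) * Nat.card G := by
  rw [← Nat.card_sigma, Nat.card_congr (sigmaFixedByEquivOrbitsProdGroup G X), Nat.card_prod]

lemma card_orbitRel_quotient_eq_of_card_fixedBy_eq {G X Y : Type*} [Group G] [Finite G]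
    [MulAction G X] [MulAction G Y] [Finite X] [Finite Y]
    (h : ∀ g : G, Nat.card (fixedBy X g) = Nat.card (fixedBy Y g)) :
    Nat.card (orbitRel.Quotient G X) = Nat.card (orbitRel.Quotient G Y) := by
  cases nonempty_fintype G
  refine Nat.eq_of_mul_eq_mul_right (Nat.card_pos (α := G)) ?_
  rw [← sum_natCard_fixedBy, ← sum_natCard_fixedBy]
  exact Finset.sum_congr rfl fun g _ => h g

end MulAction

namespace AddAut

variable {G V : Type*} [Group G] [AddCommGroup V] {act : G → AddAut V}

lemma antiHom_inv_eq_neg (hone : act 1 = 0) (hmul : ∀ g h : G, act (g * h) = act h + act g)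
    (g : G) : act g⁻¹ = -act g :=
  (neg_eq_of_add_eq_zero_left (by rw [← hmul, mul_inv_cancel, hone])).symm

abbrev opMulAction (hone : act 1 = 0) (hmul : ∀ g h : G, act (g * h) = act h + act g) :
    MulAction Gᵐᵒᵖ V where
  smul g v := act g.unop v
  one_smul v := by
    show act 1 v = v
    rw [hone]; rfl
  mul_smul g h v := by
    show act (g * h).unop v = act g.unop (act h.unop v)
    rw [MulOpposite.unop_mul, hmul]; rfl

abbrev opMulActionAddChar (M : Type*) [Monoid M] (hone : act 1 = 0)
    (hmul : ∀ g h : G, act (g * h) = act h + act g) : MulAction Gᵐᵒᵖ (AddChar V M) where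
  smul g ψ := ψ.compAddMonoidHom (act g.unop⁻¹).toAddMonoidHom
  one_smul ψ := by
    ext v
    show ψ (act 1⁻¹ v) = ψ v
    rw [inv_one, hone]; rfl
  mul_smul g h ψ := by
    ext v
    show ψ (act (g * h).unop⁻¹ v) = ψ (act h.unop⁻¹ (act g.unop⁻¹ v))
    rw [MulOpposite.unop_mul, mul_inv_rev, hmul]; rfl

end AddAut

/-- Let G be a finite group acting on the right by automorphisms on a finite
abelian group (V,+).  Then the number of orbits of G on V equals the number of orbits of G on
the set V̂ = Hom((V,+), ℂ*) of linear characters, where (τ.g)(v) = τ(v.g⁻¹).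
The right action is encoded by `act : G → AddAut V` with `act (g*h) = act h * act g`,
so that `v.g = act g v`. -/
theorem stmt_0 {G V : Type} [Group G] [Fintype G] [AddCommGroup V] [Fintype V]
    (act : G → AddAut V) (hone : act 1 = 0)
    (hmul : ∀ g h : G, act (g * h) = act h + act g) :
    Nat.card (Quot (fun v w : V => ∃ g : G, act g v = w)) =
      Nat.card (Quot (fun τ σ : AddChar V ℂˣ => ∃ g : G, ∀ v : V, σ v = τ (act g⁻¹ v))) := by
  let := AddAut.opMulAction hone hmul
  let := AddAut.opMulActionAddChar ℂˣ hone hmul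
  have : Finite Gᵐᵒᵖ := .of_equiv G MulOpposite.opEquiv
  have orbitRel_vectors : (fun v w : V => ∃ g : G, act g v = w) =
      fun v w => ∃ g : Gᵐᵒᵖ, g • v = w := by
    ext v w
    exact (MulOpposite.op_surjective.exists (p := fun g : Gᵐᵒᵖ => g • v = w)).symm
  have orbitRel_characters : (fun τ σ : AddChar V ℂˣ => ∃ g : G, ∀ v : V, σ v = τ (act g⁻¹ v)) =
      fun τ σ => ∃ g : Gᵐᵒᵖ, g • τ = σ := by
    ext τ σ
    rw [MulOpposite.op_surjective.exists]
    exact exists_congr fun g => by rw [DFunLike.ext_iff]; exact forall_congr' fun v => eq_comm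
  rw [orbitRel_vectors, orbitRel_characters, card_quot_exists_smul_eq, card_quot_exists_smul_eq]
  refine card_orbitRel_quotient_eq_of_card_fixedBy_eq fun g => ?_
  calc Nat.card (fixedBy V g) = Nat.card (fixedPoints (act g.unop)) := rfl
    _ = Nat.card (fixedPoints (act g.unop).toEquiv.symm) := by rw [fixedPoints_symm]; rfl
    _ = Nat.card (fixedPoints (act g.unop⁻¹)) := by rw [AddAut.antiHom_inv_eq_neg hone hmul]; rfl
    _ = Nat.card (fixedBy (AddChar V ℂˣ) g) :=
      (AddChar.card_fixedPoints_compAddMonoidHom (act g.unop⁻¹).toAddMonoidHom).symm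
end

section
/- Let G be a finite group acting on the right by automorphisms on a finite abelian group (V,+), and let f : G → V be a bijective right 1-cocycle. Then the ℂG-module ℂ^V, equipped with the monomial action χ g = χ(f(g⁻¹)) · (χ.g) on the basis V̂, is isomorphic to the right regular representation of ℂG, an isomorphism being given by f* : ℂ^V → ℂ^G, τ ↦ τ∘f. -/
theorem stmt_4_general {G V : Type} [Group G] [AddCommGroup V]
    (act : G → AddAut V)
    (f : G → V) (hf : ∀ x g : G, f (x * g) = act g (f x) + f g)
    (hbij : Function.Bijective f) :
    Function.Bijective (fun τ : V → ℂ => τ ∘ f) ∧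
    ∀ (χ : AddChar V ℂˣ) (g h : G),
      χ (f g⁻¹) * χ (act g⁻¹ (f h)) = χ (f (h * g⁻¹)) :=
  ⟨hbij.comp_right, fun χ g h => by rw [hf, AddChar.map_add_eq_mul, mul_comm]⟩

/-- If G acts on the right by automorphisms on (V,+) (`act : G → AddAut V`,
`act (g*h) = act h * act g`, `v.g = act g v`) and f : G → V is a bijective right 1-cocycle,
then the ℂG-module ℂ^V with the monomial action χ g = χ(f(g⁻¹))·(χ.g) on the basis V̂ is
isomorphic to the right regular representation of ℂG, an isomorphism being given by
f* : τ ↦ τ∘f.  This is expressed by: f* is bijective, and f* intertwines the monomial action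
on the basis V̂ with right translation (ρ g)(h) = ρ(h g⁻¹):
f*(χ g)(h) = χ(f(g⁻¹))·χ(f(h).g⁻¹) equals (f*(χ) g)(h) = χ(f(h g⁻¹)). -/
theorem stmt_4 {G V : Type} [Group G] [Fintype G] [AddCommGroup V] [Fintype V]
    (act : G → AddAut V) (hone : act 1 = 0)
    (hmul : ∀ g h : G, act (g * h) = act h + act g)
    (f : G → V) (hf : ∀ x g : G, f (x * g) = act g (f x) + f g)
    (hbij : Function.Bijective f) :
    Function.Bijective (fun τ : V → ℂ => τ ∘ f) ∧
    ∀ (χ : AddChar V ℂˣ) (g h : G),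
      χ (f g⁻¹) * χ (act g⁻¹ (f h)) = χ (f (h * g⁻¹)) :=
  stmt_4_general act f hf hbij
end

section
/- Let q be a prime power, J ⊆ Φ⁺ closed, and A, B ∈ V_J. Then either ℂO_A^r ≅ ℂO_B^r and ℂO_A^l ≅ ℂO_B^l as ℂU_J-modules, or else ℂO_A^r and ℂO_B^r (respectively ℂO_A^l and ℂO_B^l) are disjoint, i.e. they have no irreducible constituent in common, equivalently the characters they afford are orthogonal. -/
open Matrix
open scoped Classical

noncomputable section

variable {F : Type} [Field F] [Fintype F] {n : ℕ}

/-- The pattern subgroup U_J ⊆ U_n(q): unitriangular matrices supported (off the diagonal)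
on J. -/
def patternU (J : Set (Fin n × Fin n)) : Set (Matrix (Fin n) (Fin n) F) :=
  {u | (∀ i, u i i = 1) ∧ ∀ i j, i ≠ j → (i, j) ∉ J → u i j = 0}

/-- V_J = {A ∈ M_n(q) : A_{ij} = 0 unless (i,j) ∈ J}. -/
def patternV (J : Set (Fin n × Fin n)) : Set (Matrix (Fin n) (Fin n) F) :=
  {A | ∀ i j, (i, j) ∉ J → A i j = 0}

/-- The natural projection π_J : M_n(q) → V_J. -/
def projJ (J : Set (Fin n × Fin n)) (B : Matrix (Fin n) (Fin n) F) :
    Matrix (Fin n) (Fin n) F :=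
  Matrix.of fun i j => if (i, j) ∈ J then B i j else 0

/-- The pairing A*(B) = Σ_{i,j} A_{ij} B_{ij}; for A supported on J this is the linear
form A* = Σ_{(i,j)∈J} A_{ij} ε_{ij} evaluated at B. -/
def dpair (A B : Matrix (Fin n) (Fin n) F) : F :=
  ∑ i, ∑ j, A i j * B i j

/-- The right orbit O_A^r = [A].U_J on the level of matrices: [A].u = [π_J(A u^{−t})]. -/
def orbR (J : Set (Fin n × Fin n)) (A : Matrix (Fin n) (Fin n) F) :
    Set (Matrix (Fin n) (Fin n) F) :=
  {B | ∃ u ∈ patternU J, B = projJ J (A * (u⁻¹)ᵀ)}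

/-- The left orbit O_A^l = U_J.[A] on the level of matrices: u.[A] = [π_J(u^{−t} A)]. -/
def orbL (J : Set (Fin n × Fin n)) (A : Matrix (Fin n) (Fin n) F) :
    Set (Matrix (Fin n) (Fin n) F) :=
  {B | ∃ u ∈ patternU J, B = projJ J ((u⁻¹)ᵀ * A)}

/-- The biorbit O_A^bi = U_J.[A].U_J on the level of matrices. -/
def orbBi (J : Set (Fin n × Fin n)) (A : Matrix (Fin n) (Fin n) F) :
    Set (Matrix (Fin n) (Fin n) F) :=
  {B | ∃ u ∈ patternU J, ∃ v ∈ patternU J, B = projJ J ((u⁻¹)ᵀ * projJ J (A * (v⁻¹)ᵀ))}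

/-- The character of U_J afforded by the monomial right orbit module ℂO_A^r (with respect to
the nontrivial character θ of (𝔽_q,+)): the trace of g on the monomial basis
{[B] : B ∈ O_A^r}, where [B]g = [B](g⁻¹ − E)·[B].g, so that the diagonal entry at [B] is
θ(B*(g⁻¹ − E)) if [B].g = [B] and 0 otherwise. -/
def rcharFn (J : Set (Fin n × Fin n)) (θ : AddChar F ℂ)
    (A g : Matrix (Fin n) (Fin n) F) : ℂ :=
  ∑ᶠ B ∈ orbR J A, if projJ J (B * (g⁻¹)ᵀ) = B then θ (dpair B (g⁻¹ - 1)) else 0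

/-- The character of U_J afforded by the monomial left orbit module ℂO_A^l. -/
def lcharFn (J : Set (Fin n × Fin n)) (θ : AddChar F ℂ)
    (A g : Matrix (Fin n) (Fin n) F) : ℂ :=
  ∑ᶠ B ∈ orbL J A, if projJ J ((g⁻¹)ᵀ * B) = B then θ (dpair B (g⁻¹ - 1)) else 0

/-- The character of U_J afforded by the biorbit span ℂO_A^bi regarded as a right
ℂU_J-module. -/
def bcharFn (J : Set (Fin n × Fin n)) (θ : AddChar F ℂ)
    (A g : Matrix (Fin n) (Fin n) F) : ℂ :=
  ∑ᶠ B ∈ orbBi J A, if projJ J (B * (g⁻¹)ᵀ) = B then θ (dpair B (g⁻¹ - 1)) else 0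

end

/-! The right and left orbit characters of `A` depend only on the biorbit `U_J.[A].U_J`: the
left action commutes with the right one, so `C ↦ u.C` maps `O_A^r` bijectively onto `O_{u.A}^r`,
and it preserves the diagonal entry `θ(C*(g⁻¹ - E))` at each fixed point `C` of `g`.

For orthogonality, averaging over the left action writes `|V_J| χ_A^r(g)` as the sum of
`θ((u.C)*(g⁻¹ - E))` over `(C, u) ∈ O_A^r × U_J`. Since `g ↦ g⁻¹ - E` maps `U_J` bijectively
onto `V_J`, the inner product of two such sums counts, up to the factor `|V_J|`, the
coincidences `u.C = v.D` between the two biorbits, and there are none when they are disjoint.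

Transposition exchanges left and right actions and replaces `J` by its transpose, so the left
statements follow from the right ones; this is why the pattern groups are treated for arbitrary
strict partial orders `J`. -/

variable {F : Type} [Field F] {n : ℕ} {J : Set (Fin n × Fin n)}
  {A B C N X Y u v g : Matrix (Fin n) (Fin n) F}

section Pattern

@[simp] lemma projJ_apply (B : Matrix (Fin n) (Fin n) F) (i j : Fin n) :
    projJ J B i j = if (i, j) ∈ J then B i j else 0 := rfl

lemma projJ_mem_patternV (B : Matrix (Fin n) (Fin n) F) : projJ J B ∈ patternV J := by
  intro i j h
  simp [h]

lemma projJ_eq_self (hA : A ∈ patternV J) : projJ J A = A := by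
  ext i j
  by_cases h : (i, j) ∈ J <;> simp [h, hA i j]

lemma projJ_sub (X Y : Matrix (Fin n) (Fin n) F) : projJ J (X - Y) = projJ J X - projJ J Y := by
  ext i j
  by_cases h : (i, j) ∈ J <;> simp [h]

lemma add_mem_patternV (hA : A ∈ patternV J) (hB : B ∈ patternV J) : A + B ∈ patternV J :=
  fun i j h => by simp [hA i j h, hB i j h]

lemma neg_mem_patternV (hA : A ∈ patternV J) : -A ∈ patternV J :=
  fun i j h => by simp [hA i j h]

lemma sub_mem_patternV (hA : A ∈ patternV J) (hB : B ∈ patternV J) : A - B ∈ patternV J :=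
  fun i j h => by simp [hA i j h, hB i j h]

lemma mul_mem_patternV [SetRel.IsTrans J]
    (hA : A ∈ patternV J) (hB : B ∈ patternV J) : A * B ∈ patternV J := by
  intro i j hij
  refine (mul_apply ..).trans (Finset.sum_eq_zero fun k _ => ?_)
  by_cases hik : (i, k) ∈ J
  · rw [hB k j fun hkj => hij (SetRel.trans J hik hkj), mul_zero]
  · rw [hA i k hik, zero_mul]

lemma projJ_transpose (J : Set (Fin n × Fin n)) (A : Matrix (Fin n) (Fin n) F) :
    projJ (SetRel.inv J) Aᵀ = (projJ J A)ᵀ := rfl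

lemma transpose_mem_patternU_iff : uᵀ ∈ patternU (SetRel.inv J) ↔ u ∈ patternU J :=
  and_congr Iff.rfl ⟨fun h i j hij => h j i hij.symm, fun h i j hij => h j i hij.symm⟩

instance SetRel.isTrans_inv {α : Type*} {R : SetRel α α} [R.IsTrans] : R.inv.IsTrans where
  trans _ _ _ hab hbc := R.trans hbc hab

instance SetRel.isIrrefl_inv {α : Type*} {R : SetRel α α} [R.IsIrrefl] : R.inv.IsIrrefl where
  irrefl a := R.irrefl a

end Pattern

section PatternGroup

lemma mem_patternU_iff [SetRel.IsIrrefl J] :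
    u ∈ patternU J ↔ u - 1 ∈ patternV J := by
  refine ⟨fun ⟨hdiag, hoff⟩ i j hij => ?_, fun h => ⟨fun i => ?_, fun i j hne hij => ?_⟩⟩
  · rcases eq_or_ne i j with rfl | hne
    · simp [hdiag]
    · simp [hoff i j hne hij, one_apply_ne hne]
  · simpa [sub_eq_zero] using h i i (SetRel.irrefl J i)
  · simpa [one_apply_ne hne] using h i j hij

lemma mul_mem_patternU [SetRel.IsTrans J] [SetRel.IsIrrefl J]
    (hu : u ∈ patternU J) (hv : v ∈ patternU J) : u * v ∈ patternU J := by
  rw [mem_patternU_iff] at hu hv ⊢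
  have h : u * v - 1 = (u - 1) * (v - 1) + (u - 1) + (v - 1) := by noncomm_ring
  rw [h]
  exact add_mem_patternV (add_mem_patternV (mul_mem_patternV hu hv) hu) hv

/-- Strictly increasing along `J`, so it bounds the nilpotency index of matrices in `V_J`. -/
noncomputable def predCount (J : Set (Fin n × Fin n)) (j : Fin n) : ℕ :=
  (Finset.univ.filter fun i => (i, j) ∈ J).card

lemma predCount_lt_predCount [SetRel.IsTrans J] [SetRel.IsIrrefl J]
    {i j : Fin n} (hij : (i, j) ∈ J) : predCount J i < predCount J j := by
  refine Finset.card_lt_card (Finset.ssubset_iff_of_subset ?_ |>.2 ⟨i, ?_, ?_⟩)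
  · intro k
    simpa using fun hki => SetRel.trans J hki hij
  · simpa using hij
  · simpa using SetRel.irrefl J i

lemma pow_apply_eq_zero_of_lt [SetRel.IsTrans J] [SetRel.IsIrrefl J]
    (hN : N ∈ patternV J) (k : ℕ) {i j : Fin n} (h : predCount J j < predCount J i + k) :
    (N ^ k) i j = 0 := by
  induction k generalizing i with
  | zero => exact one_apply_ne fun hij => by simp [hij] at h
  | succ k ih =>
    rw [pow_succ', mul_apply]
    refine Finset.sum_eq_zero fun m _ => ?_
    by_cases him : (i, m) ∈ J
    · rw [ih (by have := predCount_lt_predCount him; omega), mul_zero]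
    · rw [hN i m him, zero_mul]

lemma pow_eq_zero_of_mem_patternV [SetRel.IsTrans J] [SetRel.IsIrrefl J]
    (hN : N ∈ patternV J) : N ^ (n + 1) = 0 := by
  ext i j
  refine pow_apply_eq_zero_of_lt hN _ ?_
  have : predCount J j ≤ n := (Finset.card_le_univ _).trans_eq (Fintype.card_fin n)
  omega

lemma pow_succ_mem_patternV [SetRel.IsTrans J]
    (hN : N ∈ patternV J) (k : ℕ) : N ^ (k + 1) ∈ patternV J := by
  induction k with
  | zero => simpa using hN
  | succ k ih => exact pow_succ N (k + 1) ▸ mul_mem_patternV ih hN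

/-- The inverse is the geometric series in the nilpotent matrix `1 - u`. -/
lemma exists_mul_eq_one [SetRel.IsTrans J] [SetRel.IsIrrefl J]
    (hu : u ∈ patternU J) : ∃ w ∈ patternU J, u * w = 1 := by
  have hN : 1 - u ∈ patternV J := by
    simpa using neg_mem_patternV (mem_patternU_iff.1 hu)
  refine ⟨∑ k ∈ Finset.range (n + 1), (1 - u) ^ k, ?_, ?_⟩
  · rw [mem_patternU_iff, Finset.sum_range_succ', pow_zero, add_sub_cancel_right]
    intro i j hij
    rw [Matrix.sum_apply]
    exact Finset.sum_eq_zero fun k _ => pow_succ_mem_patternV hN k i j hij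
  · simpa [pow_eq_zero_of_mem_patternV hN] using mul_neg_geom_sum (1 - u) (n + 1)

lemma isUnit_det_of_mem_patternU [SetRel.IsTrans J] [SetRel.IsIrrefl J]
    (hu : u ∈ patternU J) : IsUnit u.det :=
  let ⟨_, _, h⟩ := exists_mul_eq_one hu
  isUnit_det_of_right_inverse h

lemma inv_mem_patternU [SetRel.IsTrans J] [SetRel.IsIrrefl J]
    (hu : u ∈ patternU J) : u⁻¹ ∈ patternU J :=
  let ⟨_, hw, h⟩ := exists_mul_eq_one hu
  inv_eq_right_inv h ▸ hw

end PatternGroup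

section Actions

/-- `[A].u = [π_J(A u⁻ᵀ)]`. -/
noncomputable def rAct (J : Set (Fin n × Fin n)) (A u : Matrix (Fin n) (Fin n) F) :
    Matrix (Fin n) (Fin n) F :=
  projJ J (A * (u⁻¹)ᵀ)

/-- `u.[A] = [π_J(u⁻ᵀ A)]`. -/
noncomputable def lAct (J : Set (Fin n × Fin n)) (u A : Matrix (Fin n) (Fin n) F) :
    Matrix (Fin n) (Fin n) F :=
  projJ J ((u⁻¹)ᵀ * A)

lemma projJ_projJ_mul_transpose [SetRel.IsTrans J]
    (hv : v ∈ patternU J) (X : Matrix (Fin n) (Fin n) F) :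
    projJ J (projJ J X * vᵀ) = projJ J (X * vᵀ) := by
  ext i j
  by_cases hij : (i, j) ∈ J
  · simp only [projJ_apply, hij, if_true, mul_apply, transpose_apply]
    refine Finset.sum_congr rfl fun k _ => ?_
    by_cases hik : (i, k) ∈ J
    · simp [hik]
    · have hkj : k ≠ j := by rintro rfl; exact hik hij
      simp [hik, hv.2 j k hkj.symm fun hjk => hik (SetRel.trans J hij hjk)]
  · simp [hij]

lemma projJ_transpose_mul_projJ [SetRel.IsTrans J]
    (hu : u ∈ patternU J) (X : Matrix (Fin n) (Fin n) F) :
    projJ J (uᵀ * projJ J X) = projJ J (uᵀ * X) := by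
  apply transpose_injective
  rw [← projJ_transpose, ← projJ_transpose, transpose_mul, transpose_mul, transpose_transpose,
    ← projJ_transpose]
  exact projJ_projJ_mul_transpose (transpose_mem_patternU_iff.2 hu) Xᵀ

lemma rAct_rAct [SetRel.IsTrans J] [SetRel.IsIrrefl J] (hv : v ∈ patternU J)
    (A u : Matrix (Fin n) (Fin n) F) : rAct J (rAct J A u) v = rAct J A (u * v) := by
  rw [rAct, rAct, projJ_projJ_mul_transpose (inv_mem_patternU hv),
    rAct, Matrix.mul_inv_rev, transpose_mul, Matrix.mul_assoc]

lemma lAct_lAct [SetRel.IsTrans J] [SetRel.IsIrrefl J] (hu : u ∈ patternU J)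
    (v A : Matrix (Fin n) (Fin n) F) : lAct J u (lAct J v A) = lAct J (u * v) A := by
  rw [lAct, lAct, projJ_transpose_mul_projJ (inv_mem_patternU hu),
    lAct, Matrix.mul_inv_rev, transpose_mul, Matrix.mul_assoc]

lemma lAct_rAct [SetRel.IsTrans J] [SetRel.IsIrrefl J]
    (hu : u ∈ patternU J) (hv : v ∈ patternU J) (A : Matrix (Fin n) (Fin n) F) :
    lAct J u (rAct J A v) = rAct J (lAct J u A) v := by
  rw [lAct, rAct, rAct, lAct, projJ_transpose_mul_projJ (inv_mem_patternU hu),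
    projJ_projJ_mul_transpose (inv_mem_patternU hv), Matrix.mul_assoc]

lemma lAct_injOn [SetRel.IsTrans J] [SetRel.IsIrrefl J] (hu : u ∈ patternU J) :
    Set.InjOn (lAct J u) (patternV J) := by
  intro C hC D hD h
  have key : ∀ X ∈ patternV J, lAct J u⁻¹ (lAct J u X) = X := fun X hX => by
    rw [lAct_lAct (inv_mem_patternU hu),
      nonsing_inv_mul u (isUnit_det_of_mem_patternU hu), lAct, inv_one, transpose_one,
      Matrix.one_mul, projJ_eq_self hX]
  rw [← key C hC, h, key D hD]

lemma rAct_mem_patternV (A u : Matrix (Fin n) (Fin n) F) : rAct J A u ∈ patternV J :=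
  projJ_mem_patternV _

lemma lAct_mem_patternV (u A : Matrix (Fin n) (Fin n) F) : lAct J u A ∈ patternV J :=
  projJ_mem_patternV _

lemma orbR_subset_patternV (A : Matrix (Fin n) (Fin n) F) : orbR J A ⊆ patternV J := by
  rintro _ ⟨u, -, rfl⟩
  exact projJ_mem_patternV _

lemma orbR_rAct [SetRel.IsTrans J] [SetRel.IsIrrefl J] (hu : u ∈ patternU J)
    (A : Matrix (Fin n) (Fin n) F) : orbR J (rAct J A u) = orbR J A := by
  ext B
  constructor
  · rintro ⟨v, hv, rfl⟩
    exact ⟨u * v, mul_mem_patternU hu hv, rAct_rAct hv A u⟩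
  · rintro ⟨w, hw, rfl⟩
    refine ⟨u⁻¹ * w, mul_mem_patternU (inv_mem_patternU hu) hw, ?_⟩
    change rAct J A w = rAct J (rAct J A u) (u⁻¹ * w)
    rw [rAct_rAct (mul_mem_patternU (inv_mem_patternU hu) hw), ← Matrix.mul_assoc,
      mul_nonsing_inv u (isUnit_det_of_mem_patternU hu), Matrix.one_mul]

lemma orbR_lAct [SetRel.IsTrans J] [SetRel.IsIrrefl J] (hu : u ∈ patternU J)
    (A : Matrix (Fin n) (Fin n) F) : orbR J (lAct J u A) = lAct J u '' orbR J A := by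
  ext B
  constructor
  · rintro ⟨v, hv, rfl⟩
    exact ⟨rAct J A v, ⟨v, hv, rfl⟩, lAct_rAct hu hv A⟩
  · rintro ⟨_, ⟨v, hv, rfl⟩, rfl⟩
    exact ⟨v, hv, lAct_rAct hu hv A⟩

lemma lAct_mem_orbBi (hC : C ∈ orbR J A) (hu : u ∈ patternU J) : lAct J u C ∈ orbBi J A := by
  obtain ⟨v, hv, rfl⟩ := hC
  exact ⟨u, hu, v, hv, rfl⟩

end Actions

section Pairing

lemma dpair_eq_trace (A B : Matrix (Fin n) (Fin n) F) : dpair A B = trace (Aᵀ * B) := by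
  simp only [dpair, trace, diag_apply, mul_apply, transpose_apply]
  exact Finset.sum_comm

lemma dpair_sub_left (X Y Z : Matrix (Fin n) (Fin n) F) :
    dpair (X - Y) Z = dpair X Z - dpair Y Z := by
  simp [dpair_eq_trace, Matrix.sub_mul]

lemma dpair_add_right (X Y Z : Matrix (Fin n) (Fin n) F) :
    dpair X (Y + Z) = dpair X Y + dpair X Z := by
  simp [dpair_eq_trace, Matrix.mul_add]

@[simp] lemma dpair_zero_left (Z : Matrix (Fin n) (Fin n) F) : dpair 0 Z = 0 := by
  simp [dpair]

lemma dpair_transpose_left (A B : Matrix (Fin n) (Fin n) F) : dpair Aᵀ B = dpair A Bᵀ := by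
  simp only [dpair, transpose_apply]
  exact Finset.sum_comm

lemma dpair_transpose_mul (P C Y : Matrix (Fin n) (Fin n) F) :
    dpair (Pᵀ * C) Y = dpair C (P * Y) := by
  rw [dpair_eq_trace, dpair_eq_trace, transpose_mul, transpose_transpose, Matrix.mul_assoc]

lemma dpair_mul_right (C P Y : Matrix (Fin n) (Fin n) F) :
    dpair C (P * Y) = dpair (C * Yᵀ) P := by
  rw [dpair_eq_trace, dpair_eq_trace, transpose_mul, transpose_transpose, ← Matrix.mul_assoc]
  exact trace_mul_cycle _ _ _

lemma dpair_projJ_left (hN : N ∈ patternV J) (M : Matrix (Fin n) (Fin n) F) :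
    dpair (projJ J M) N = dpair M N := by
  refine Finset.sum_congr rfl fun i _ => Finset.sum_congr rfl fun j _ => ?_
  by_cases h : (i, j) ∈ J <;> simp [h, hN i j]

lemma dpair_single (M : Matrix (Fin n) (Fin n) F) (i j : Fin n) (c : F) :
    dpair M (single i j c) = M i j * c := by
  simp [dpair, single_apply, ite_and]

end Pairing

section CharacterSums

variable [Fintype F]

lemma sum_patternV_addChar_dpair {θ : AddChar F ℂ} (hθ : θ ≠ 1) (M : Matrix (Fin n) (Fin n) F) :
    ∑ N ∈ (patternV J).toFinset, θ (dpair M N) =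
      if projJ J M = 0 then ((patternV (F := F) J).toFinset.card : ℂ) else 0 := by
  split_ifs with hM
  · have h1 : ∀ N ∈ (patternV J).toFinset, θ (dpair M N) = 1 := fun N hN => by
      rw [← dpair_projJ_left (Set.mem_toFinset.1 hN), hM, dpair_zero_left,
        AddChar.map_zero_eq_one]
    simp [Finset.sum_congr rfl h1]
  obtain ⟨i, j, hij⟩ : ∃ i j, projJ J M i j ≠ 0 := by
    by_contra! h
    exact hM (Matrix.ext h)
  have hJ : (i, j) ∈ J := by
    by_contra h
    simp [h] at hij
  have hMij : M i j ≠ 0 := by simpa [hJ] using hij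
  obtain ⟨s, hs⟩ := AddChar.ne_one_iff.1 hθ
  have hN₀ : single i j (s / M i j) ∈ patternV J := fun k l hkl => by
    simp only [single_apply, ite_eq_right_iff, and_imp]
    rintro rfl rfl
    exact absurd hJ hkl
  refine eq_zero_of_mul_eq_self_left hs ?_
  rw [Finset.mul_sum]
  refine Finset.sum_equiv (Equiv.addRight (single i j (s / M i j))) (fun N => ?_) fun N _ => ?_
  · simp only [Set.mem_toFinset, Equiv.coe_addRight]
    exact ⟨fun h => add_mem_patternV h hN₀, fun h => by simpa using sub_mem_patternV h hN₀⟩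
  · rw [Equiv.coe_addRight, dpair_add_right, AddChar.map_add_eq_mul, dpair_single,
      mul_div_cancel₀ _ hMij, mul_comm]

lemma sum_patternU_inv_sub_one [SetRel.IsTrans J] [SetRel.IsIrrefl J]
    {β : Type*} [AddCommMonoid β] (f : Matrix (Fin n) (Fin n) F → β) :
    ∑ u ∈ (patternU J).toFinset, f (u⁻¹ - 1) = ∑ N ∈ (patternV J).toFinset, f N := by
  have hV : ∀ {N : Matrix (Fin n) (Fin n) F}, N ∈ patternV J ↔ N + 1 ∈ patternU J := by
    simp [mem_patternU_iff]
  refine Finset.sum_nbij' (fun u => u⁻¹ - 1) (fun N => (N + 1)⁻¹) (fun u hu => ?_)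
    (fun N hN => ?_) (fun u hu => ?_) (fun N hN => ?_) fun _ _ => rfl
  · rw [Set.mem_toFinset] at hu ⊢
    exact mem_patternU_iff.1 (inv_mem_patternU hu)
  · rw [Set.mem_toFinset] at hN ⊢
    exact inv_mem_patternU (hV.1 hN)
  · rw [Set.mem_toFinset] at hu
    simp [nonsing_inv_nonsing_inv u (isUnit_det_of_mem_patternU hu)]
  · rw [Set.mem_toFinset] at hN
    simp [nonsing_inv_nonsing_inv _ (isUnit_det_of_mem_patternU (hV.1 hN))]

end CharacterSums

section RightOrbitCharacter

/-- The diagonal entry of `g` at the basis vector `[C]` of a monomial right orbit module. -/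
noncomputable def rTerm (J : Set (Fin n × Fin n)) (θ : AddChar F ℂ)
    (C g : Matrix (Fin n) (Fin n) F) : ℂ :=
  if rAct J C g = C then θ (dpair C (g⁻¹ - 1)) else 0

lemma rcharFn_eq_finsum [Fintype F] (θ : AddChar F ℂ) (A g : Matrix (Fin n) (Fin n) F) :
    rcharFn J θ A g = ∑ᶠ C ∈ orbR J A, rTerm J θ C g := rfl

lemma projJ_mul_transpose_inv_sub_one (hC : C ∈ patternV J) (g : Matrix (Fin n) (Fin n) F) :
    projJ J (C * (g⁻¹ - 1)ᵀ) = rAct J C g - C := by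
  rw [transpose_sub, transpose_one, Matrix.mul_sub, Matrix.mul_one, projJ_sub, projJ_eq_self hC,
    rAct]

lemma dpair_lAct (hY : Y ∈ patternV J) (u C : Matrix (Fin n) (Fin n) F) :
    dpair (lAct J u C) Y = dpair C Y + dpair (C * Yᵀ) (u⁻¹ - 1) := by
  rw [lAct, dpair_projJ_left hY, dpair_transpose_mul, ← dpair_mul_right, ← dpair_add_right]
  congr 1
  noncomm_ring

lemma rTerm_lAct [SetRel.IsTrans J] [SetRel.IsIrrefl J] (θ : AddChar F ℂ)
    (hC : C ∈ patternV J) (hu : u ∈ patternU J) (hg : g ∈ patternU J) :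
    rTerm J θ (lAct J u C) g = rTerm J θ C g := by
  have hfix : rAct J (lAct J u C) g = lAct J u C ↔ rAct J C g = C := by
    rw [← lAct_rAct hu hg]
    exact (lAct_injOn hu).eq_iff (rAct_mem_patternV _ _) hC
  have hu' : u⁻¹ - 1 ∈ patternV J := mem_patternU_iff.1 (inv_mem_patternU hu)
  have hg' : g⁻¹ - 1 ∈ patternV J := mem_patternU_iff.1 (inv_mem_patternU hg)
  simp only [rTerm, hfix]
  split_ifs with h
  · rw [dpair_lAct hg', ← dpair_projJ_left hu', projJ_mul_transpose_inv_sub_one hC, h, sub_self,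
      dpair_zero_left, add_zero]
  · rfl

lemma rcharFn_rAct [Fintype F] [SetRel.IsTrans J] [SetRel.IsIrrefl J]
    (θ : AddChar F ℂ) (hu : u ∈ patternU J) (A : Matrix (Fin n) (Fin n) F) :
    rcharFn J θ (rAct J A u) = rcharFn J θ A := by
  ext g
  rw [rcharFn_eq_finsum, rcharFn_eq_finsum, orbR_rAct hu]

lemma rcharFn_lAct [Fintype F] [SetRel.IsTrans J] [SetRel.IsIrrefl J]
    (θ : AddChar F ℂ) (hu : u ∈ patternU J) (hg : g ∈ patternU J) (A : Matrix (Fin n) (Fin n) F) :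
    rcharFn J θ (lAct J u A) g = rcharFn J θ A g := by
  rw [rcharFn_eq_finsum, orbR_lAct hu,
    finsum_mem_image ((lAct_injOn hu).mono (orbR_subset_patternV A)), rcharFn_eq_finsum]
  exact finsum_mem_congr rfl fun C hC => rTerm_lAct θ (orbR_subset_patternV A hC) hu hg

lemma rcharFn_eq_of_mem_orbBi [Fintype F] [SetRel.IsTrans J] [SetRel.IsIrrefl J]
    (θ : AddChar F ℂ) (hX : X ∈ orbBi J A) (hg : g ∈ patternU J) :
    rcharFn J θ X g = rcharFn J θ A g := by
  obtain ⟨u, hu, v, hv, rfl⟩ := hX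
  exact (rcharFn_lAct θ hu hg _).trans (congrFun (rcharFn_rAct θ hv A) g)

variable [Fintype F]

/-- `⟨u.C, Y⟩ = ⟨C, Y⟩ + ⟨C Yᵀ, u⁻¹ - 1⟩` and `u ↦ u⁻¹ - 1` maps `U_J` onto `V_J`, so the sum
over `u` is a character sum over `V_J`; it vanishes unless `C` is fixed by `g`. -/
lemma sum_patternU_addChar_dpair_lAct [SetRel.IsTrans J] [SetRel.IsIrrefl J]
    {θ : AddChar F ℂ} (hθ : θ ≠ 1) (hC : C ∈ patternV J) (hg : g ∈ patternU J) :
    ∑ u ∈ (patternU J).toFinset, θ (dpair (lAct J u C) (g⁻¹ - 1)) =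
      (patternV (F := F) J).toFinset.card * rTerm J θ C g := by
  have hg' : g⁻¹ - 1 ∈ patternV J := mem_patternU_iff.1 (inv_mem_patternU hg)
  simp_rw [dpair_lAct hg', AddChar.map_add_eq_mul]
  rw [← Finset.mul_sum, sum_patternU_inv_sub_one fun N => θ (dpair (C * (g⁻¹ - 1)ᵀ) N),
    sum_patternV_addChar_dpair hθ, projJ_mul_transpose_inv_sub_one hC]
  simp only [sub_eq_zero, rTerm]
  split_ifs <;> ring

lemma card_mul_rcharFn [SetRel.IsTrans J] [SetRel.IsIrrefl J]
    {θ : AddChar F ℂ} (hθ : θ ≠ 1) (hg : g ∈ patternU J) (A : Matrix (Fin n) (Fin n) F) :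
    (patternV (F := F) J).toFinset.card * rcharFn J θ A g =
      ∑ p ∈ (orbR J A).toFinset ×ˢ (patternU J).toFinset,
        θ (dpair (lAct J p.2 p.1) (g⁻¹ - 1)) := by
  rw [rcharFn_eq_finsum, finsum_mem_eq_toFinset_sum, Finset.mul_sum, Finset.sum_product]
  refine Finset.sum_congr rfl fun C hC => ?_
  rw [sum_patternU_addChar_dpair_lAct hθ (orbR_subset_patternV A (Set.mem_toFinset.1 hC)) hg]

lemma sum_patternU_mul_conj_eq_zero [SetRel.IsTrans J] [SetRel.IsIrrefl J]
    {θ : AddChar F ℂ} (hθ : θ ≠ 1) {ι κ : Type*} (s : Finset ι) (t : Finset κ)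
    (x : ι → Matrix (Fin n) (Fin n) F) (y : κ → Matrix (Fin n) (Fin n) F)
    (hx : ∀ i ∈ s, x i ∈ patternV J) (hy : ∀ k ∈ t, y k ∈ patternV J)
    (hxy : ∀ i ∈ s, ∀ k ∈ t, x i ≠ y k) :
    ∑ g ∈ (patternU J).toFinset, (∑ i ∈ s, θ (dpair (x i) (g⁻¹ - 1))) *
      starRingEnd ℂ (∑ k ∈ t, θ (dpair (y k) (g⁻¹ - 1))) = 0 := by
  simp_rw [map_sum, Finset.sum_mul_sum, ← AddChar.map_neg_eq_conj, ← AddChar.map_add_eq_mul,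
    ← sub_eq_add_neg, ← dpair_sub_left]
  rw [Finset.sum_comm]
  refine Finset.sum_eq_zero fun i hi => ?_
  rw [Finset.sum_comm]
  refine Finset.sum_eq_zero fun k hk => ?_
  rw [sum_patternU_inv_sub_one fun N => θ (dpair (x i - y k) N), sum_patternV_addChar_dpair hθ,
    projJ_eq_self (sub_mem_patternV (hx i hi) (hy k hk)), if_neg (sub_ne_zero.2 (hxy i hi k hk))]

lemma sum_rcharFn_mul_conj_eq_zero [SetRel.IsTrans J] [SetRel.IsIrrefl J]
    {θ : AddChar F ℂ} (hθ : θ ≠ 1) (hAB : Disjoint (orbBi J A) (orbBi J B)) :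
    ∑ᶠ g ∈ patternU J, rcharFn J θ A g * starRingEnd ℂ (rcharFn J θ B g) = 0 := by
  set c : ℂ := Nat.cast (patternV (F := F) J).toFinset.card
  have hc : c ≠ 0 :=
    Nat.cast_ne_zero.2 (Finset.card_ne_zero_of_mem (Set.mem_toFinset.2 fun _ _ _ => rfl))
  rw [finsum_mem_eq_toFinset_sum]
  refine (mul_eq_zero.1 ?_).resolve_left (pow_ne_zero 2 hc)
  calc c ^ 2 * ∑ g ∈ (patternU J).toFinset, rcharFn J θ A g * starRingEnd ℂ (rcharFn J θ B g)
      = ∑ g ∈ (patternU J).toFinset,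
          (c * rcharFn J θ A g) * starRingEnd ℂ (c * rcharFn J θ B g) := by
        rw [Finset.mul_sum]
        refine Finset.sum_congr rfl fun g _ => ?_
        rw [map_mul, map_natCast]
        ring
    _ = 0 := by
      refine (Finset.sum_congr rfl fun g hg => by
        rw [card_mul_rcharFn hθ (Set.mem_toFinset.1 hg),
          card_mul_rcharFn hθ (Set.mem_toFinset.1 hg)]).trans ?_
      refine sum_patternU_mul_conj_eq_zero hθ _ _ _ _ (fun _ _ => lAct_mem_patternV _ _)
        (fun _ _ => lAct_mem_patternV _ _) fun p hp q hq h => ?_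
      simp only [Finset.mem_product, Set.mem_toFinset] at hp hq
      exact Set.disjoint_left.1 hAB (lAct_mem_orbBi hp.1 hp.2) (h ▸ lAct_mem_orbBi hq.1 hq.2)

end RightOrbitCharacter

section Transpose

lemma image_transpose_patternU :
    transpose '' patternU J = patternU (F := F) (SetRel.inv J) := by
  ext w
  refine ⟨?_, fun hw => ⟨wᵀ, transpose_mem_patternU_iff.1 hw, transpose_transpose w⟩⟩
  rintro ⟨u, hu, rfl⟩
  exact transpose_mem_patternU_iff.2 hu

lemma rAct_transpose (J : Set (Fin n × Fin n)) (A u : Matrix (Fin n) (Fin n) F) :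
    (rAct J A u)ᵀ = lAct (SetRel.inv J) uᵀ Aᵀ := by
  rw [rAct, lAct, ← transpose_nonsing_inv, transpose_transpose, ← projJ_transpose, transpose_mul,
    transpose_transpose]

lemma lAct_transpose (J : Set (Fin n × Fin n)) (u A : Matrix (Fin n) (Fin n) F) :
    (lAct J u A)ᵀ = rAct (SetRel.inv J) Aᵀ uᵀ := by
  rw [rAct, lAct, ← transpose_nonsing_inv, transpose_transpose, ← projJ_transpose, transpose_mul,
    transpose_transpose]

lemma transpose_mem_orbBi [SetRel.IsTrans J] [SetRel.IsIrrefl J]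
    (hX : X ∈ orbBi J A) : Xᵀ ∈ orbBi (SetRel.inv J) Aᵀ := by
  obtain ⟨u, hu, v, hv, rfl⟩ := hX
  refine ⟨vᵀ, transpose_mem_patternU_iff.2 hv, uᵀ, transpose_mem_patternU_iff.2 hu, ?_⟩
  change (lAct J u (rAct J A v))ᵀ = lAct _ vᵀ (rAct _ Aᵀ uᵀ)
  rw [lAct_transpose, rAct_transpose, lAct_rAct (transpose_mem_patternU_iff.2 hv)
    (transpose_mem_patternU_iff.2 hu)]

lemma orbL_eq_image_transpose (J : Set (Fin n × Fin n)) (A : Matrix (Fin n) (Fin n) F) :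
    orbL J A = transpose '' orbR (SetRel.inv J) Aᵀ := by
  ext X
  constructor
  · rintro ⟨u, hu, rfl⟩
    refine ⟨_, ⟨uᵀ, transpose_mem_patternU_iff.2 hu, rfl⟩, ?_⟩
    change (rAct _ Aᵀ uᵀ)ᵀ = lAct J u A
    rw [← lAct_transpose, transpose_transpose]
  · rintro ⟨_, ⟨w, hw, rfl⟩, rfl⟩
    refine ⟨wᵀ, transpose_mem_patternU_iff.1 hw, ?_⟩
    change (rAct _ Aᵀ w)ᵀ = lAct J wᵀ A
    rw [rAct_transpose, transpose_transpose]
    rfl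

lemma finsum_patternU_transpose {β : Type*} [AddCommMonoid β] (f : Matrix (Fin n) (Fin n) F → β) :
    ∑ᶠ g ∈ patternU J, f gᵀ = ∑ᶠ g ∈ patternU (SetRel.inv J), f g := by
  rw [← image_transpose_patternU, finsum_mem_image transpose_injective.injOn]

variable [Fintype F]

lemma lcharFn_eq_rcharFn_transpose (θ : AddChar F ℂ) (A g : Matrix (Fin n) (Fin n) F) :
    lcharFn J θ A g = rcharFn (SetRel.inv J) θ Aᵀ gᵀ := by
  rw [lcharFn, orbL_eq_image_transpose, finsum_mem_image transpose_injective.injOn,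
    rcharFn_eq_finsum]
  refine finsum_mem_congr rfl fun C _ => ?_
  have hfix : lAct J g Cᵀ = Cᵀ ↔ rAct (SetRel.inv J) C gᵀ = C := by
    rw [← transpose_inj, lAct_transpose, transpose_transpose]
  refine if_congr hfix ?_ rfl
  rw [dpair_transpose_left, transpose_sub, transpose_one, transpose_nonsing_inv]

lemma lcharFn_eq_of_mem_orbBi [SetRel.IsTrans J] [SetRel.IsIrrefl J]
    (θ : AddChar F ℂ) (hX : X ∈ orbBi J A) (hg : g ∈ patternU J) :
    lcharFn J θ X g = lcharFn J θ A g := by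
  rw [lcharFn_eq_rcharFn_transpose, lcharFn_eq_rcharFn_transpose]
  exact rcharFn_eq_of_mem_orbBi θ (transpose_mem_orbBi hX) (transpose_mem_patternU_iff.2 hg)

lemma sum_lcharFn_mul_conj_eq_zero [SetRel.IsTrans J] [SetRel.IsIrrefl J]
    {θ : AddChar F ℂ} (hθ : θ ≠ 1) (hAB : Disjoint (orbBi J A) (orbBi J B)) :
    ∑ᶠ g ∈ patternU J, lcharFn J θ A g * starRingEnd ℂ (lcharFn J θ B g) = 0 := by
  simp only [lcharFn_eq_rcharFn_transpose]
  rw [finsum_patternU_transpose fun g =>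
    rcharFn (SetRel.inv J) θ Aᵀ g * starRingEnd ℂ (rcharFn (SetRel.inv J) θ Bᵀ g)]
  refine sum_rcharFn_mul_conj_eq_zero hθ (Set.disjoint_left.2 fun Y hYA hYB => ?_)
  exact Set.disjoint_left.1 hAB (transpose_mem_orbBi hYA) (transpose_mem_orbBi hYB)

end Transpose

/-- Since `ℂU_J` is semisimple, isomorphism and disjointness of the orbit modules amount to
equality and orthogonality of the characters they afford. -/
theorem stmt_11_general {F : Type} [Field F] [Fintype F] {n : ℕ}
    (J : Set (Fin n × Fin n))
    (hΦ : ∀ p ∈ J, p.1 < p.2)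
    (hcl : ∀ i j k : Fin n, (i, j) ∈ J → (j, k) ∈ J → (i, k) ∈ J)
    (θ : AddChar F ℂ) (hθ : θ ≠ 1)
    (A B : Matrix (Fin n) (Fin n) F) :
    ((∀ g ∈ patternU J, rcharFn J θ A g = rcharFn J θ B g) ∧
     (∀ g ∈ patternU J, lcharFn J θ A g = lcharFn J θ B g)) ∨
    ((∑ᶠ g ∈ patternU J, rcharFn J θ A g * (starRingEnd ℂ) (rcharFn J θ B g)) = 0 ∧
     (∑ᶠ g ∈ patternU J, lcharFn J θ A g * (starRingEnd ℂ) (lcharFn J θ B g)) = 0) := by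
  have : SetRel.IsTrans J := ⟨hcl⟩
  have : SetRel.IsIrrefl J := ⟨fun i hi => (hΦ _ hi).false⟩
  by_cases hAB : Disjoint (orbBi J A) (orbBi J B)
  · exact Or.inr ⟨sum_rcharFn_mul_conj_eq_zero hθ hAB, sum_lcharFn_mul_conj_eq_zero hθ hAB⟩
  obtain ⟨X, hXA, hXB⟩ := Set.not_disjoint_iff.1 hAB
  refine Or.inl ⟨fun g hg => ?_, fun g hg => ?_⟩
  · rw [← rcharFn_eq_of_mem_orbBi θ hXA hg, rcharFn_eq_of_mem_orbBi θ hXB hg]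
  · rw [← lcharFn_eq_of_mem_orbBi θ hXA hg, lcharFn_eq_of_mem_orbBi θ hXB hg]

/-- For J ⊆ Φ⁺ closed and A, B ∈ V_J, either ℂO_A^r ≅ ℂO_B^r and
ℂO_A^l ≅ ℂO_B^l as ℂU_J-modules, or else they are disjoint.  Since ℂU_J is semisimple,
isomorphism of modules is equivalent to equality of the characters they afford, and
disjointness is equivalent to orthogonality of these characters, so the statement reads:
either the right (resp. left) orbit characters of A and B agree on U_J, or both the right
and the left orbit characters of A and B are orthogonal. -/
theorem stmt_11 {F : Type} [Field F] [Fintype F] {n : ℕ}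
    (J : Set (Fin n × Fin n))
    (hΦ : ∀ p ∈ J, p.1 < p.2)
    (hcl : ∀ i j k : Fin n, (i, j) ∈ J → (j, k) ∈ J → (i, k) ∈ J)
    (θ : AddChar F ℂ) (hθ : θ ≠ 1)
    (A B : Matrix (Fin n) (Fin n) F) (hA : A ∈ patternV J) (hB : B ∈ patternV J) :
    ((∀ g ∈ patternU J, rcharFn J θ A g = rcharFn J θ B g) ∧
     (∀ g ∈ patternU J, lcharFn J θ A g = lcharFn J θ B g)) ∨
    ((∑ᶠ g ∈ patternU J, rcharFn J θ A g * (starRingEnd ℂ) (rcharFn J θ B g)) = 0 ∧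
     (∑ᶠ g ∈ patternU J, lcharFn J θ A g * (starRingEnd ℂ) (lcharFn J θ B g)) = 0) :=
  stmt_11_general J hΦ hcl θ hθ A B
end

section
/- Let q be a prime power, J ⊆ Φ⁺ closed, and A, B ∈ V_J. Then the following are equivalent: (i) ℂO_A^r ≅ ℂO_B^r as right ℂU_J-modules; (ii) [B] ∈ O_A^bi; (iii) ℂO_A^l ≅ ℂO_B^l as left ℂU_J-modules. In particular each biorbit module ℂO_A^bi is a sum of Wedderburn components (two-sided ideals corresponding to blocks of irreducibles) of ℂU_J. -/
open Matrix
open scoped Classical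
set_option linter.unusedSectionVars false
set_option maxHeartbeats 1000000

noncomputable section

variable {F : Type} [Field F] [Fintype F] {n : ℕ}

namespace SAux

variable {J : Set (Fin n × Fin n)}


variable {J : Set (Fin n × Fin n)}

lemma projJ_apply (X : Matrix (Fin n) (Fin n) F) (i j : Fin n) :
    projJ J X i j = if (i, j) ∈ J then X i j else 0 := rfl

lemma projJ_mem (X : Matrix (Fin n) (Fin n) F) : projJ J X ∈ patternV J := by
  intro i j h; simp [projJ_apply, h]

lemma projJ_eq_self {X : Matrix (Fin n) (Fin n) F} (hX : X ∈ patternV J) : projJ J X = X := by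
  ext i j; by_cases h : (i, j) ∈ J <;> simp [projJ_apply, h, hX i j]

lemma projJ_add (X Y : Matrix (Fin n) (Fin n) F) :
    projJ J (X + Y) = projJ J X + projJ J Y := by
  ext i j; by_cases h : (i, j) ∈ J <;> simp [projJ_apply, h]

lemma projJ_sub (X Y : Matrix (Fin n) (Fin n) F) :
    projJ J (X - Y) = projJ J X - projJ J Y := by
  ext i j; by_cases h : (i, j) ∈ J <;> simp [projJ_apply, h]

lemma V_add {x y : Matrix (Fin n) (Fin n) F} (hx : x ∈ patternV J) (hy : y ∈ patternV J) :
    x + y ∈ patternV J := by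
  intro i j h; simp [Matrix.add_apply, hx i j h, hy i j h]

lemma V_neg {x : Matrix (Fin n) (Fin n) F} (hx : x ∈ patternV J) : -x ∈ patternV J := by
  intro i j h; simp [Matrix.neg_apply, hx i j h]

lemma V_sub {x y : Matrix (Fin n) (Fin n) F} (hx : x ∈ patternV J) (hy : y ∈ patternV J) :
    x - y ∈ patternV J := by
  intro i j h; simp [Matrix.sub_apply, hx i j h, hy i j h]

lemma V_zero : (0 : Matrix (Fin n) (Fin n) F) ∈ patternV J := by
  intro i j h; simp

lemma diag_notMem (hΦ : ∀ p ∈ J, p.1 < p.2) (i : Fin n) : (i, i) ∉ J :=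
  fun h => lt_irrefl _ (hΦ _ h)

lemma mem_U_iff (hΦ : ∀ p ∈ J, p.1 < p.2) {u : Matrix (Fin n) (Fin n) F} :
    u ∈ patternU J ↔ u - 1 ∈ patternV J := by
  constructor
  · rintro ⟨h1, h2⟩ i j hij
    by_cases h : i = j
    · subst h; simp [Matrix.sub_apply, h1 i]
    · simp [Matrix.sub_apply, h2 i j h hij, Matrix.one_apply_ne h]
  · intro h
    constructor
    · intro i
      have := h i i (diag_notMem hΦ i)
      rw [Matrix.sub_apply, Matrix.one_apply_eq, sub_eq_zero] at this
      exact this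
    · intro i j hne hij
      have := h i j hij
      rwa [Matrix.sub_apply, Matrix.one_apply_ne hne, sub_zero] at this

lemma V_mul (hcl : ∀ i j k : Fin n, (i, j) ∈ J → (j, k) ∈ J → (i, k) ∈ J)
    {x y : Matrix (Fin n) (Fin n) F} (hx : x ∈ patternV J) (hy : y ∈ patternV J) :
    x * y ∈ patternV J := by
  intro i k hik
  rw [Matrix.mul_apply]
  apply Finset.sum_eq_zero
  intro j _
  by_cases h1 : (i, j) ∈ J
  · by_cases h2 : (j, k) ∈ J
    · exact absurd (hcl i j k h1 h2) hik
    · simp [hy j k h2]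
  · simp [hx i j h1]

lemma pow_entry (hΦ : ∀ p ∈ J, p.1 < p.2) {x : Matrix (Fin n) (Fin n) F}
    (hx : x ∈ patternV J) :
    ∀ (k : ℕ) (i j : Fin n), (j : ℕ) < (i : ℕ) + k → (x ^ k) i j = 0 := by
  intro k
  induction k with
  | zero =>
    intro i j h
    have hji : j ≠ i := by
      intro e; subst e; omega
    rw [pow_zero, Matrix.one_apply_ne' hji]
  | succ k ih =>
    intro i j h
    rw [pow_succ, Matrix.mul_apply]
    apply Finset.sum_eq_zero
    intro m _
    by_cases hm : (m : ℕ) < (i : ℕ) + k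
    · simp [ih i m hm]
    · have : x m j = 0 := by
        by_cases hmj : (m, j) ∈ J
        · have h2 : (m : ℕ) < (j : ℕ) := hΦ _ hmj
          omega
        · exact hx m j hmj
      simp [this]

lemma V_nilpotent (hΦ : ∀ p ∈ J, p.1 < p.2) {x : Matrix (Fin n) (Fin n) F}
    (hx : x ∈ patternV J) : x ^ n = 0 := by
  ext i j
  rw [pow_entry hΦ hx n i j (by omega)]
  simp


variable {J : Set (Fin n × Fin n)}

section Grp1
variable (hΦ : ∀ p ∈ J, p.1 < p.2)
    (hcl : ∀ i j k : Fin n, (i, j) ∈ J → (j, k) ∈ J → (i, k) ∈ J)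
include hΦ hcl

lemma U_one : (1 : Matrix (Fin n) (Fin n) F) ∈ patternU J := by
  rw [mem_U_iff hΦ, sub_self]; exact V_zero

lemma U_mul {u v : Matrix (Fin n) (Fin n) F} (hu : u ∈ patternU J) (hv : v ∈ patternU J) :
    u * v ∈ patternU J := by
  rw [mem_U_iff hΦ] at hu hv ⊢
  have : u * v - 1 = (u - 1) * (v - 1) + ((u - 1) + (v - 1)) := by noncomm_ring
  rw [this]
  exact V_add (V_mul hcl hu hv) (V_add hu hv)

lemma V_pow {x : Matrix (Fin n) (Fin n) F} (hx : x ∈ patternV J) :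
    ∀ k, 1 ≤ k → x ^ k ∈ patternV J := by
  intro k
  induction k with
  | zero => intro h; omega
  | succ k ih =>
    intro _
    rcases Nat.eq_zero_or_pos k with h | h
    · subst h; rw [pow_one]; exact hx
    · rw [pow_succ]
      exact V_mul hcl (ih h) hx

lemma U_inv {u : Matrix (Fin n) (Fin n) F} (hu : u ∈ patternU J) :
    u⁻¹ ∈ patternU J ∧ u * u⁻¹ = 1 ∧ u⁻¹ * u = 1 := by
  set y : Matrix (Fin n) (Fin n) F := 1 - u with hy
  have hyV : y ∈ patternV J := by
    have := (mem_U_iff hΦ).mp hu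
    have h2 : y = -(u - 1) := by rw [hy, neg_sub]
    rw [h2]; exact V_neg this
  set w : Matrix (Fin n) (Fin n) F := ∑ k ∈ Finset.range n, y ^ k with hw
  have hyn : y ^ n = 0 := V_nilpotent hΦ hyV
  have huw : u * w = 1 := by
    have h3 : u = -(y - 1) := by rw [hy, neg_sub]; abel
    rw [h3, hw, neg_mul, mul_geom_sum, hyn]; abel
  have hwu : w * u = 1 := by
    have h3 : u = -(y - 1) := by rw [hy, neg_sub]; abel
    rw [h3, hw, mul_neg, geom_sum_mul, hyn]; abel
  have hinv : u⁻¹ = w := Matrix.inv_eq_right_inv huw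
  have hwU : w ∈ patternU J := by
    rw [mem_U_iff hΦ]
    intro i j hij
    have hn : 0 < n := i.pos
    have hwij : w i j = ∑ k ∈ Finset.range n, (y ^ k) i j := by
      rw [hw]; simp [Matrix.sum_apply]
    rw [Matrix.sub_apply, hwij, Finset.sum_eq_single 0]
    · simp
    · intro k _ hk
      exact V_pow hΦ hcl hyV k (Nat.one_le_iff_ne_zero.mpr hk) i j hij
    · intro h; exact absurd (Finset.mem_range.mpr hn) h
  exact ⟨hinv ▸ hwU, hinv ▸ huw, hinv ▸ hwu⟩

lemma U_inv_inv {u : Matrix (Fin n) (Fin n) F} (hu : u ∈ patternU J) : u⁻¹⁻¹ = u :=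
  Matrix.inv_eq_right_inv (U_inv hΦ hcl hu).2.2
end Grp1
section Grp2
variable (hΦ : ∀ p ∈ J, p.1 < p.2)
    (hcl : ∀ i j k : Fin n, (i, j) ∈ J → (j, k) ∈ J → (i, k) ∈ J)
include hΦ hcl

/-- Kill lemma, right version. -/
lemma kill_right {Y v : Matrix (Fin n) (Fin n) F}
    (hY : ∀ i j, (i, j) ∈ J → Y i j = 0) (hv : v ∈ patternU J) :
    projJ J (Y * vᵀ) = 0 := by
  ext i l
  rw [projJ_apply, Matrix.zero_apply]
  split_ifs with h
  · rw [Matrix.mul_apply]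
    apply Finset.sum_eq_zero
    intro m _
    rw [Matrix.transpose_apply]
    by_cases hm : m = l
    · subst hm; rw [hY i m h, zero_mul]
    · by_cases hlm : (l, m) ∈ J
      · rw [hY i m (hcl i l m h hlm), zero_mul]
      · rw [hv.2 l m (Ne.symm hm) hlm, mul_zero]
  · rfl

/-- Kill lemma, left version. -/
lemma kill_left {Y u : Matrix (Fin n) (Fin n) F}
    (hY : ∀ i j, (i, j) ∈ J → Y i j = 0) (hu : u ∈ patternU J) :
    projJ J (uᵀ * Y) = 0 := by
  ext i l
  rw [projJ_apply, Matrix.zero_apply]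
  split_ifs with h
  · rw [Matrix.mul_apply]
    apply Finset.sum_eq_zero
    intro m _
    rw [Matrix.transpose_apply]
    by_cases hm : m = i
    · subst hm; rw [hY m l h, mul_zero]
    · by_cases hmi : (m, i) ∈ J
      · rw [hY m l (hcl m i l hmi h), mul_zero]
      · rw [hu.2 m i hm hmi, zero_mul]
  · rfl

lemma proj_mul_right (X : Matrix (Fin n) (Fin n) F) {v : Matrix (Fin n) (Fin n) F}
    (hv : v ∈ patternU J) :
    projJ J (projJ J X * vᵀ) = projJ J (X * vᵀ) := by
  have h0 : projJ J ((projJ J X - X) * vᵀ) = 0 := by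
    apply kill_right hΦ hcl _ hv
    intro i j h
    rw [Matrix.sub_apply, projJ_apply, if_pos h, sub_self]
  rw [Matrix.sub_mul, projJ_sub, sub_eq_zero] at h0
  exact h0

lemma proj_mul_left (X : Matrix (Fin n) (Fin n) F) {u : Matrix (Fin n) (Fin n) F}
    (hu : u ∈ patternU J) :
    projJ J (uᵀ * projJ J X) = projJ J (uᵀ * X) := by
  have h0 : projJ J (uᵀ * (projJ J X - X)) = 0 := by
    apply kill_left hΦ hcl _ hu
    intro i j h
    rw [Matrix.sub_apply, projJ_apply, if_pos h, sub_self]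
  rw [Matrix.mul_sub, projJ_sub, sub_eq_zero] at h0
  exact h0

lemma proj_comm {u v : Matrix (Fin n) (Fin n) F} (hu : u ∈ patternU J) (hv : v ∈ patternU J)
    (X : Matrix (Fin n) (Fin n) F) :
    projJ J (uᵀ * projJ J (X * vᵀ)) = projJ J (projJ J (uᵀ * X) * vᵀ) := by
  rw [proj_mul_left hΦ hcl _ hu, proj_mul_right hΦ hcl _ hv, Matrix.mul_assoc]

lemma mem_orbR_iff {A B : Matrix (Fin n) (Fin n) F} :
    B ∈ orbR J A ↔ ∃ v ∈ patternU J, B = projJ J (A * vᵀ) := by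
  constructor
  · rintro ⟨u, hu, rfl⟩
    exact ⟨u⁻¹, (U_inv hΦ hcl hu).1, rfl⟩
  · rintro ⟨v, hv, rfl⟩
    refine ⟨v⁻¹, (U_inv hΦ hcl hv).1, ?_⟩
    rw [U_inv_inv hΦ hcl hv]

lemma mem_orbL_iff {A B : Matrix (Fin n) (Fin n) F} :
    B ∈ orbL J A ↔ ∃ u ∈ patternU J, B = projJ J (uᵀ * A) := by
  constructor
  · rintro ⟨u, hu, rfl⟩
    exact ⟨u⁻¹, (U_inv hΦ hcl hu).1, rfl⟩
  · rintro ⟨u, hu, rfl⟩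
    refine ⟨u⁻¹, (U_inv hΦ hcl hu).1, ?_⟩
    rw [U_inv_inv hΦ hcl hu]

lemma mem_orbBi_iff {A B : Matrix (Fin n) (Fin n) F} :
    B ∈ orbBi J A ↔ ∃ u ∈ patternU J, ∃ v ∈ patternU J, B = projJ J (uᵀ * projJ J (A * vᵀ)) := by
  constructor
  · rintro ⟨u, hu, v, hv, rfl⟩
    exact ⟨u⁻¹, (U_inv hΦ hcl hu).1, v⁻¹, (U_inv hΦ hcl hv).1, rfl⟩
  · rintro ⟨u, hu, v, hv, rfl⟩
    refine ⟨u⁻¹, (U_inv hΦ hcl hu).1, v⁻¹, (U_inv hΦ hcl hv).1, ?_⟩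
    rw [U_inv_inv hΦ hcl hu, U_inv_inv hΦ hcl hv]

lemma mem_orbBi_iff' {A B : Matrix (Fin n) (Fin n) F} :
    B ∈ orbBi J A ↔ ∃ u ∈ patternU J, ∃ v ∈ patternU J, B = projJ J (projJ J (uᵀ * A) * vᵀ) := by
  rw [mem_orbBi_iff hΦ hcl]
  constructor
  · rintro ⟨u, hu, v, hv, rfl⟩
    exact ⟨u, hu, v, hv, proj_comm hΦ hcl hu hv A⟩
  · rintro ⟨u, hu, v, hv, rfl⟩
    exact ⟨u, hu, v, hv, (proj_comm hΦ hcl hu hv A).symm⟩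

/-- composition of two right moves -/
lemma sR_sR {v w : Matrix (Fin n) (Fin n) F} (hv : v ∈ patternU J) (hw : w ∈ patternU J)
    (X : Matrix (Fin n) (Fin n) F) :
    projJ J (projJ J (X * vᵀ) * wᵀ) = projJ J (X * (w * v)ᵀ) := by
  rw [proj_mul_right hΦ hcl _ hw, Matrix.transpose_mul, ← Matrix.mul_assoc]

lemma sL_sL {u w : Matrix (Fin n) (Fin n) F} (hu : u ∈ patternU J) (hw : w ∈ patternU J)
    (X : Matrix (Fin n) (Fin n) F) :
    projJ J (wᵀ * projJ J (uᵀ * X)) = projJ J ((u * w)ᵀ * X) := by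
  rw [proj_mul_left hΦ hcl _ hw, Matrix.transpose_mul, Matrix.mul_assoc]

lemma orbR_eq_of_mem {A C : Matrix (Fin n) (Fin n) F} (hA : A ∈ patternV J)
    (hC : C ∈ orbR J A) : orbR J C = orbR J A := by
  rw [mem_orbR_iff hΦ hcl] at hC
  obtain ⟨v, hv, rfl⟩ := hC
  ext D
  rw [mem_orbR_iff hΦ hcl, mem_orbR_iff hΦ hcl]
  constructor
  · rintro ⟨w, hw, rfl⟩
    exact ⟨w * v, U_mul hΦ hcl hw hv, (sR_sR hΦ hcl hv hw A)⟩
  · rintro ⟨w, hw, rfl⟩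
    refine ⟨w * v⁻¹, U_mul hΦ hcl hw (U_inv hΦ hcl hv).1, ?_⟩
    rw [sR_sR hΦ hcl hv (U_mul hΦ hcl hw (U_inv hΦ hcl hv).1), Matrix.mul_assoc, (U_inv hΦ hcl hv).2.2,
      Matrix.mul_one]
  
lemma orbL_eq_of_mem {A C : Matrix (Fin n) (Fin n) F} (hA : A ∈ patternV J)
    (hC : C ∈ orbL J A) : orbL J C = orbL J A := by
  rw [mem_orbL_iff hΦ hcl] at hC
  obtain ⟨u, hu, rfl⟩ := hC
  ext D
  rw [mem_orbL_iff hΦ hcl, mem_orbL_iff hΦ hcl]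
  constructor
  · rintro ⟨w, hw, rfl⟩
    exact ⟨u * w, U_mul hΦ hcl hu hw, (sL_sL hΦ hcl hu hw A)⟩
  · rintro ⟨w, hw, rfl⟩
    refine ⟨u⁻¹ * w, U_mul hΦ hcl (U_inv hΦ hcl hu).1 hw, ?_⟩
    rw [sL_sL hΦ hcl hu (U_mul hΦ hcl (U_inv hΦ hcl hu).1 hw), ← Matrix.mul_assoc, (U_inv hΦ hcl hu).2.1,
      Matrix.one_mul]

end Grp2
lemma dpair_eq_trace (X W : Matrix (Fin n) (Fin n) F) :
    dpair X W = Matrix.trace (X * Wᵀ) := by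
  unfold dpair
  simp [Matrix.trace, Matrix.diag, Matrix.mul_apply]

lemma dpair_master1 (X Y Z : Matrix (Fin n) (Fin n) F) :
    dpair X (Y * Z) = dpair (Yᵀ * X) Z := by
  rw [dpair_eq_trace, dpair_eq_trace, Matrix.transpose_mul, Matrix.mul_assoc,
    ← Matrix.mul_assoc X Zᵀ Yᵀ, Matrix.trace_mul_cycle]
  rw [Matrix.mul_assoc]

lemma dpair_master2 (X Y Z : Matrix (Fin n) (Fin n) F) :
    dpair X (Y * Z) = dpair (X * Zᵀ) Y := by
  rw [dpair_eq_trace, dpair_eq_trace, Matrix.transpose_mul, ← Matrix.mul_assoc, 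
    Matrix.trace_mul_cycle]

lemma dpair_add_left (X Y Z : Matrix (Fin n) (Fin n) F) :
    dpair (X + Y) Z = dpair X Z + dpair Y Z := by
  rw [dpair_eq_trace, dpair_eq_trace, dpair_eq_trace, Matrix.add_mul, Matrix.trace_add]

lemma dpair_add_right (X Y Z : Matrix (Fin n) (Fin n) F) :
    dpair X (Y + Z) = dpair X Y + dpair X Z := by
  rw [dpair_eq_trace, dpair_eq_trace, dpair_eq_trace, Matrix.transpose_add, Matrix.mul_add,
    Matrix.trace_add]

lemma dpair_sub_left (X Y Z : Matrix (Fin n) (Fin n) F) :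
    dpair (X - Y) Z = dpair X Z - dpair Y Z := by
  rw [dpair_eq_trace, dpair_eq_trace, dpair_eq_trace, Matrix.sub_mul, Matrix.trace_sub]

lemma dpair_zero_left (Z : Matrix (Fin n) (Fin n) F) : dpair 0 Z = 0 := by
  rw [dpair_eq_trace, Matrix.zero_mul, Matrix.trace_zero]

lemma dpair_projJ_left {Y : Matrix (Fin n) (Fin n) F} (hY : Y ∈ patternV J)
    (X : Matrix (Fin n) (Fin n) F) : dpair (projJ J X) Y = dpair X Y := by
  unfold dpair
  refine Finset.sum_congr rfl fun i _ => Finset.sum_congr rfl fun j _ => ?_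
  by_cases h : (i, j) ∈ J
  · rw [show projJ J X i j = X i j from by simp [projJ, h]]
  · rw [hY i j h, mul_zero, mul_zero]

/-- The finset of elements of V_J. -/
def Vfin (J : Set (Fin n × Fin n)) : Finset (Matrix (Fin n) (Fin n) F) :=
  Finset.univ.filter (· ∈ patternV J)

lemma mem_Vfin {x : Matrix (Fin n) (Fin n) F} : x ∈ Vfin (F := F) J ↔ x ∈ patternV J := by
  simp [Vfin]

/-- The finset of elements of U_J. -/
def Ufin (J : Set (Fin n × Fin n)) : Finset (Matrix (Fin n) (Fin n) F) :=
  Finset.univ.filter (· ∈ patternU J)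

lemma mem_Ufin {x : Matrix (Fin n) (Fin n) F} : x ∈ Ufin (F := F) J ↔ x ∈ patternU J := by
  simp [Ufin]

/-- Character-sum (Fourier) lemma. -/
lemma sum_theta (θ : AddChar F ℂ) (hθ : θ ≠ 1) {D : Matrix (Fin n) (Fin n) F}
    (hD : D ∈ patternV J) :
    ∑ x ∈ Vfin (F := F) J, θ (dpair D x)
      = if D = 0 then ((Vfin (F := F) J).card : ℂ) else 0 := by
  split_ifs with h
  · subst h
    have : ∀ x ∈ Vfin (F := F) J, θ (dpair 0 x) = 1 := by
      intro x _; rw [dpair_zero_left, AddChar.map_zero_eq_one]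
    rw [Finset.sum_congr rfl this, Finset.sum_const, nsmul_eq_mul, mul_one]
  · -- find nonzero entry
    have hne : ∃ i j, D i j ≠ 0 := by
      by_contra hc
      push_neg at hc
      exact h (by ext i j; simp [hc i j])
    obtain ⟨i₀, j₀, hij0⟩ := hne
    have hJ0 : (i₀, j₀) ∈ J := by
      by_contra hc; exact hij0 (hD i₀ j₀ hc)
    obtain ⟨a, ha⟩ := AddChar.ne_one_iff.mp hθ
    set t : F := a * (D i₀ j₀)⁻¹ with ht
    set E : Matrix (Fin n) (Fin n) F := Matrix.single i₀ j₀ t with hE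
    have hEV : E ∈ patternV J := by
      intro i j hij
      rw [hE]
      apply Matrix.single_apply_of_ne
      intro hc
      exact hij (by rw [← hc.1, ← hc.2]; exact hJ0)
    have hDE : dpair D E = a := by
      unfold dpair
      rw [Finset.sum_eq_single i₀]
      · rw [Finset.sum_eq_single j₀]
        · rw [hE, Matrix.single_apply_same, ht]
          field_simp
        · intro j _ hj
          rw [hE, Matrix.single_apply_of_ne, mul_zero]
          intro hc; exact hj hc.2.symm
        · intro hc; exact absurd (Finset.mem_univ j₀) hc
      · intro i _ hi
        apply Finset.sum_eq_zero
        intro j _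
        rw [hE, Matrix.single_apply_of_ne, mul_zero]
        intro hc; exact hi hc.1.symm
      · intro hc; exact absurd (Finset.mem_univ i₀) hc
    have key : (∑ x ∈ Vfin (F := F) J, θ (dpair D x)) * θ a
        = ∑ x ∈ Vfin (F := F) J, θ (dpair D x) := by
      rw [Finset.sum_mul]
      refine Finset.sum_nbij' (fun x => x + E) (fun x => x - E) ?_ ?_ ?_ ?_ ?_
      · intro x hx
        rw [mem_Vfin] at hx ⊢
        intro i j hij
        show (x + E) i j = 0
        rw [Matrix.add_apply, hx i j hij, hEV i j hij, add_zero]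
      · intro x hx
        rw [mem_Vfin] at hx ⊢
        intro i j hij
        show (x - E) i j = 0
        rw [Matrix.sub_apply, hx i j hij, hEV i j hij, sub_zero]
      · intro x _; show x + E - E = x; abel
      · intro x _; show x - E + E = x; abel
      · intro x _
        show θ (dpair D x) * θ a = θ (dpair D (x + E))
        rw [dpair_add_right, AddChar.map_add_eq_mul, hDE]
    have h2 : (∑ x ∈ Vfin (F := F) J, θ (dpair D x)) * (θ a - 1) = 0 := by
      rw [mul_sub, key, mul_one, sub_self]
    rcases mul_eq_zero.mp h2 with h3 | h3
    · exact h3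
    · exact absurd (by rwa [sub_eq_zero] at h3) ha
end SAux


namespace SAux

/-- Finset of the right orbit. -/
def orbRfin (J : Set (Fin n × Fin n)) (A : Matrix (Fin n) (Fin n) F) :
    Finset (Matrix (Fin n) (Fin n) F) := Finset.univ.filter (· ∈ orbR J A)

def orbLfin (J : Set (Fin n × Fin n)) (A : Matrix (Fin n) (Fin n) F) :
    Finset (Matrix (Fin n) (Fin n) F) := Finset.univ.filter (· ∈ orbL J A)

lemma mem_orbRfin {J : Set (Fin n × Fin n)} {A C : Matrix (Fin n) (Fin n) F} :
    C ∈ orbRfin J A ↔ C ∈ orbR J A := by simp [orbRfin]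

lemma mem_orbLfin {J : Set (Fin n × Fin n)} {A C : Matrix (Fin n) (Fin n) F} :
    C ∈ orbLfin J A ↔ C ∈ orbL J A := by simp [orbLfin]

lemma coe_orbRfin {J : Set (Fin n × Fin n)} {A : Matrix (Fin n) (Fin n) F} :
    ((orbRfin J A : Finset (Matrix (Fin n) (Fin n) F)) : Set (Matrix (Fin n) (Fin n) F))
      = orbR J A := by
  ext C; simp [orbRfin]

lemma coe_orbLfin {J : Set (Fin n × Fin n)} {A : Matrix (Fin n) (Fin n) F} :
    ((orbLfin J A : Finset (Matrix (Fin n) (Fin n) F)) : Set (Matrix (Fin n) (Fin n) F))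
      = orbL J A := by
  ext C; simp [orbLfin]

lemma rchar_eq_sum {J : Set (Fin n × Fin n)} (θ : AddChar F ℂ)
    (A g : Matrix (Fin n) (Fin n) F) :
    rcharFn J θ A g = ∑ C ∈ orbRfin J A,
      if projJ J (C * (g⁻¹)ᵀ) = C then θ (dpair C (g⁻¹ - 1)) else 0 := by
  unfold rcharFn
  rw [← coe_orbRfin, finsum_mem_coe_finset]

lemma lchar_eq_sum {J : Set (Fin n × Fin n)} (θ : AddChar F ℂ)
    (A g : Matrix (Fin n) (Fin n) F) :
    lcharFn J θ A g = ∑ C ∈ orbLfin J A,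
      if projJ J ((g⁻¹)ᵀ * C) = C then θ (dpair C (g⁻¹ - 1)) else 0 := by
  unfold lcharFn
  rw [← coe_orbLfin, finsum_mem_coe_finset]

lemma orbR_sub_V {J : Set (Fin n × Fin n)} {A C : Matrix (Fin n) (Fin n) F}
    (hC : C ∈ orbR J A) : C ∈ patternV J := by
  obtain ⟨u, hu, rfl⟩ := hC; exact projJ_mem _

lemma orbL_sub_V {J : Set (Fin n × Fin n)} {A C : Matrix (Fin n) (Fin n) F}
    (hC : C ∈ orbL J A) : C ∈ patternV J := by
  obtain ⟨u, hu, rfl⟩ := hC; exact projJ_mem _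

lemma fixR_iff {J : Set (Fin n × Fin n)} {C : Matrix (Fin n) (Fin n) F}
    (hC : C ∈ patternV J) (h : Matrix (Fin n) (Fin n) F) :
    (projJ J (C * hᵀ) = C) ↔ (projJ J (C * (h - 1)ᵀ) = 0) := by
  have e : projJ J (C * (h - 1)ᵀ) = projJ J (C * hᵀ) - C := by
    rw [Matrix.transpose_sub, Matrix.transpose_one, Matrix.mul_sub, Matrix.mul_one, projJ_sub,
      projJ_eq_self hC]
  rw [e, sub_eq_zero]

lemma fixL_iff {J : Set (Fin n × Fin n)} {C : Matrix (Fin n) (Fin n) F}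
    (hC : C ∈ patternV J) (h : Matrix (Fin n) (Fin n) F) :
    (projJ J (hᵀ * C) = C) ↔ (projJ J ((h - 1)ᵀ * C) = 0) := by
  have e : projJ J ((h - 1)ᵀ * C) = projJ J (hᵀ * C) - C := by
    rw [Matrix.transpose_sub, Matrix.transpose_one, Matrix.sub_mul, Matrix.one_mul, projJ_sub,
      projJ_eq_self hC]
  rw [e, sub_eq_zero]

section Main

variable {J : Set (Fin n × Fin n)}
variable (hΦ : ∀ p ∈ J, p.1 < p.2)
    (hcl : ∀ i j k : Fin n, (i, j) ∈ J → (j, k) ∈ J → (i, k) ∈ J)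
include hΦ hcl

lemma sum_over_U (f : Matrix (Fin n) (Fin n) F → ℂ) :
    ∑ g ∈ Ufin (F := F) J, f (g⁻¹ - 1) = ∑ M ∈ Vfin (F := F) J, f M := by
  refine Finset.sum_nbij' (fun g => g⁻¹ - 1) (fun M => (1 + M)⁻¹) ?_ ?_ ?_ ?_ ?_
  · intro g hg
    rw [mem_Ufin] at hg
    rw [mem_Vfin]
    exact (mem_U_iff hΦ).mp (U_inv hΦ hcl hg).1
  · intro M hM
    rw [mem_Vfin] at hM
    rw [mem_Ufin]
    have h1 : (1 : Matrix (Fin n) (Fin n) F) + M ∈ patternU J := by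
      rw [mem_U_iff hΦ]
      have : (1 : Matrix (Fin n) (Fin n) F) + M - 1 = M := by abel
      rwa [this]
    exact (U_inv hΦ hcl h1).1
  · intro g hg
    rw [mem_Ufin] at hg
    show (1 + (g⁻¹ - 1))⁻¹ = g
    have e : (1 : Matrix (Fin n) (Fin n) F) + (g⁻¹ - 1) = g⁻¹ := by abel
    rw [e, U_inv_inv hΦ hcl hg]
  · intro M hM
    rw [mem_Vfin] at hM
    show ((1 + M)⁻¹)⁻¹ - 1 = M
    have h1 : (1 : Matrix (Fin n) (Fin n) F) + M ∈ patternU J := by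
      rw [mem_U_iff hΦ]
      have : (1 : Matrix (Fin n) (Fin n) F) + M - 1 = M := by abel
      rwa [this]
    rw [U_inv_inv hΦ hcl h1]
    abel
  · intro g _; rfl

/-- Main counting identity, right version. -/
lemma Phi_right (θ : AddChar F ℂ) (hθ : θ ≠ 1) {A B : Matrix (Fin n) (Fin n) F}
    (hA : A ∈ patternV J) (hB : B ∈ patternV J) :
    ∑ g ∈ Ufin (F := F) J, rcharFn J θ A g * θ (dpair (-B) (g⁻¹ - 1))
      = (((∑ C ∈ orbRfin J A,
          ((Vfin (F := F) J).filter (fun x => projJ J ((1 + x)ᵀ * C) = B)).card) : ℕ) : ℂ) := by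
  have hV0 : ((Vfin (F := F) J).card : ℂ) ≠ 0 :=
    Nat.cast_ne_zero.mpr (Finset.card_ne_zero_of_mem (mem_Vfin.mpr V_zero))
  have step1 : ∀ g ∈ Ufin (F := F) J,
      rcharFn J θ A g * θ (dpair (-B) (g⁻¹ - 1))
        = (fun M => ∑ C ∈ orbRfin J A,
            if projJ J (C * Mᵀ) = 0 then θ (dpair (C - B) M) else 0) (g⁻¹ - 1) := by
    intro g hg
    rw [rchar_eq_sum θ A g]
    simp only
    rw [Finset.sum_mul]
    refine Finset.sum_congr rfl fun C hC => ?_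
    have hCV : C ∈ patternV J := orbR_sub_V (mem_orbRfin.mp hC)
    rw [ite_mul, zero_mul]
    by_cases hfix : projJ J (C * (g⁻¹)ᵀ) = C
    · rw [if_pos hfix, if_pos ((fixR_iff hCV g⁻¹).mp hfix)]
      rw [← AddChar.map_add_eq_mul, ← dpair_add_left]
      congr 2
      abel
    · rw [if_neg hfix, if_neg (fun hc => hfix ((fixR_iff hCV g⁻¹).mpr hc))]
  rw [Finset.sum_congr rfl step1, sum_over_U hΦ hcl (fun M => ∑ C ∈ orbRfin J A,
      if projJ J (C * Mᵀ) = 0 then θ (dpair (C - B) M) else 0)]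
  rw [Finset.sum_comm]
  rw [Nat.cast_sum]
  refine Finset.sum_congr rfl fun C hC => ?_
  have hCV : C ∈ patternV J := orbR_sub_V (mem_orbRfin.mp hC)
  apply mul_left_cancel₀ hV0
  rw [Finset.mul_sum]
  have lhs1 : ∀ M ∈ Vfin (F := F) J,
      ((Vfin (F := F) J).card : ℂ)
          * (if projJ J (C * Mᵀ) = 0 then θ (dpair (C - B) M) else 0)
        = ∑ x ∈ Vfin (F := F) J,
            θ (dpair (projJ J ((1 + x)ᵀ * C) - B) M) := by
    intro M hM
    have hMV : M ∈ patternV J := mem_Vfin.mp hM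
    have exp_eq : ∀ x ∈ Vfin (F := F) J,
        θ (dpair (projJ J ((1 + x)ᵀ * C) - B) M)
          = θ (dpair (C - B) M) * θ (dpair (projJ J (C * Mᵀ)) x) := by
      intro x hx
      have hxV : x ∈ patternV J := mem_Vfin.mp hx
      have e1 : dpair (projJ J (C * Mᵀ)) x = dpair (xᵀ * C) M := by
        rw [dpair_projJ_left hxV, ← dpair_master2, dpair_master1]
      have e2 : projJ J (C - B + xᵀ * C) = projJ J ((1 + x)ᵀ * C) - B := by
        rw [projJ_add, projJ_sub, projJ_eq_self hCV, projJ_eq_self hB,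
          Matrix.transpose_add, Matrix.transpose_one, Matrix.add_mul, Matrix.one_mul, projJ_add,
          projJ_eq_self hCV]
        abel
      rw [← AddChar.map_add_eq_mul, e1, ← dpair_add_left, ← e2, dpair_projJ_left hMV]
    rw [Finset.sum_congr rfl exp_eq, ← Finset.mul_sum,
      show (∑ x ∈ Vfin (F := F) J, θ (dpair (projJ J (C * Mᵀ)) x))
          = if projJ J (C * Mᵀ) = 0 then ((Vfin (F := F) J).card : ℂ) else 0 from
        sum_theta θ hθ (projJ_mem _)]
    split_ifs with h
    · ring
    · rw [mul_zero, mul_zero]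
  rw [Finset.sum_congr rfl lhs1, Finset.sum_comm]
  have inner2 : ∀ x ∈ Vfin (F := F) J,
      ∑ M ∈ Vfin (F := F) J, θ (dpair (projJ J ((1 + x)ᵀ * C) - B) M)
        = if projJ J ((1 + x)ᵀ * C) = B then ((Vfin (F := F) J).card : ℂ) else 0 := by
    intro x hx
    rw [sum_theta θ hθ (V_sub (projJ_mem _) hB)]
    simp only [sub_eq_zero]
  rw [Finset.sum_congr rfl inner2, ← Finset.sum_filter, Finset.sum_const, nsmul_eq_mul, mul_comm]

/-- Main counting identity, left version. -/
lemma Phi_left (θ : AddChar F ℂ) (hθ : θ ≠ 1) {A B : Matrix (Fin n) (Fin n) F}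
    (hA : A ∈ patternV J) (hB : B ∈ patternV J) :
    ∑ g ∈ Ufin (F := F) J, lcharFn J θ A g * θ (dpair (-B) (g⁻¹ - 1))
      = (((∑ C ∈ orbLfin J A,
          ((Vfin (F := F) J).filter (fun y => projJ J (C * (1 + y)ᵀ) = B)).card) : ℕ) : ℂ) := by
  have hV0 : ((Vfin (F := F) J).card : ℂ) ≠ 0 :=
    Nat.cast_ne_zero.mpr (Finset.card_ne_zero_of_mem (mem_Vfin.mpr V_zero))
  have step1 : ∀ g ∈ Ufin (F := F) J,
      lcharFn J θ A g * θ (dpair (-B) (g⁻¹ - 1))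
        = (fun M => ∑ C ∈ orbLfin J A,
            if projJ J (Mᵀ * C) = 0 then θ (dpair (C - B) M) else 0) (g⁻¹ - 1) := by
    intro g hg
    rw [lchar_eq_sum θ A g]
    simp only
    rw [Finset.sum_mul]
    refine Finset.sum_congr rfl fun C hC => ?_
    have hCV : C ∈ patternV J := orbL_sub_V (mem_orbLfin.mp hC)
    rw [ite_mul, zero_mul]
    by_cases hfix : projJ J ((g⁻¹)ᵀ * C) = C
    · rw [if_pos hfix, if_pos ((fixL_iff hCV g⁻¹).mp hfix)]
      rw [← AddChar.map_add_eq_mul, ← dpair_add_left]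
      congr 2
      abel
    · rw [if_neg hfix, if_neg (fun hc => hfix ((fixL_iff hCV g⁻¹).mpr hc))]
  rw [Finset.sum_congr rfl step1, sum_over_U hΦ hcl (fun M => ∑ C ∈ orbLfin J A,
      if projJ J (Mᵀ * C) = 0 then θ (dpair (C - B) M) else 0)]
  rw [Finset.sum_comm]
  rw [Nat.cast_sum]
  refine Finset.sum_congr rfl fun C hC => ?_
  have hCV : C ∈ patternV J := orbL_sub_V (mem_orbLfin.mp hC)
  apply mul_left_cancel₀ hV0
  rw [Finset.mul_sum]
  have lhs1 : ∀ M ∈ Vfin (F := F) J,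
      ((Vfin (F := F) J).card : ℂ)
          * (if projJ J (Mᵀ * C) = 0 then θ (dpair (C - B) M) else 0)
        = ∑ y ∈ Vfin (F := F) J,
            θ (dpair (projJ J (C * (1 + y)ᵀ) - B) M) := by
    intro M hM
    have hMV : M ∈ patternV J := mem_Vfin.mp hM
    have exp_eq : ∀ y ∈ Vfin (F := F) J,
        θ (dpair (projJ J (C * (1 + y)ᵀ) - B) M)
          = θ (dpair (C - B) M) * θ (dpair (projJ J (Mᵀ * C)) y) := by
      intro y hy
      have hyV : y ∈ patternV J := mem_Vfin.mp hy
      have e1 : dpair (projJ J (Mᵀ * C)) y = dpair (C * yᵀ) M := by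
        rw [dpair_projJ_left hyV, ← dpair_master1, dpair_master2]
      have e2 : projJ J (C - B + C * yᵀ) = projJ J (C * (1 + y)ᵀ) - B := by
        rw [projJ_add, projJ_sub, projJ_eq_self hCV, projJ_eq_self hB,
          Matrix.transpose_add, Matrix.transpose_one, Matrix.mul_add, Matrix.mul_one, projJ_add,
          projJ_eq_self hCV]
        abel
      rw [← AddChar.map_add_eq_mul, e1, ← dpair_add_left, ← e2, dpair_projJ_left hMV]
    rw [Finset.sum_congr rfl exp_eq, ← Finset.mul_sum,
      show (∑ y ∈ Vfin (F := F) J, θ (dpair (projJ J (Mᵀ * C)) y))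
          = if projJ J (Mᵀ * C) = 0 then ((Vfin (F := F) J).card : ℂ) else 0 from
        sum_theta θ hθ (projJ_mem _)]
    split_ifs with h
    · ring
    · rw [mul_zero, mul_zero]
  rw [Finset.sum_congr rfl lhs1, Finset.sum_comm]
  have inner2 : ∀ y ∈ Vfin (F := F) J,
      ∑ M ∈ Vfin (F := F) J, θ (dpair (projJ J (C * (1 + y)ᵀ) - B) M)
        = if projJ J (C * (1 + y)ᵀ) = B then ((Vfin (F := F) J).card : ℂ) else 0 := by
    intro y hy
    rw [sum_theta θ hθ (V_sub (projJ_mem _) hB)]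
    simp only [sub_eq_zero]
  rw [Finset.sum_congr rfl inner2, ← Finset.sum_filter, Finset.sum_const, nsmul_eq_mul, mul_comm]

lemma sL_cancel {w X : Matrix (Fin n) (Fin n) F} (hw : w ∈ patternU J) (hX : X ∈ patternV J) :
    projJ J ((w⁻¹)ᵀ * projJ J (wᵀ * X)) = X := by
  rw [sL_sL hΦ hcl hw (U_inv hΦ hcl hw).1 X, (U_inv hΦ hcl hw).2.1, Matrix.transpose_one,
    Matrix.one_mul, projJ_eq_self hX]

lemma sL_cancel' {w X : Matrix (Fin n) (Fin n) F} (hw : w ∈ patternU J) (hX : X ∈ patternV J) :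
    projJ J (wᵀ * projJ J ((w⁻¹)ᵀ * X)) = X := by
  rw [sL_sL hΦ hcl (U_inv hΦ hcl hw).1 hw X, (U_inv hΦ hcl hw).2.2, Matrix.transpose_one,
    Matrix.one_mul, projJ_eq_self hX]

lemma sR_cancel {w X : Matrix (Fin n) (Fin n) F} (hw : w ∈ patternU J) (hX : X ∈ patternV J) :
    projJ J (projJ J (X * wᵀ) * (w⁻¹)ᵀ) = X := by
  rw [sR_sR hΦ hcl hw (U_inv hΦ hcl hw).1 X, (U_inv hΦ hcl hw).2.2, Matrix.transpose_one,
    Matrix.mul_one, projJ_eq_self hX]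

lemma sR_cancel' {w X : Matrix (Fin n) (Fin n) F} (hw : w ∈ patternU J) (hX : X ∈ patternV J) :
    projJ J (projJ J (X * (w⁻¹)ᵀ) * wᵀ) = X := by
  rw [sR_sR hΦ hcl (U_inv hΦ hcl hw).1 hw X, (U_inv hΦ hcl hw).2.1, Matrix.transpose_one,
    Matrix.mul_one, projJ_eq_self hX]

lemma term_eq_R (θ : AddChar F ℂ) {D w g : Matrix (Fin n) (Fin n) F}
    (hD : D ∈ patternV J) (hw : w ∈ patternU J) (hg : g ∈ patternU J) :
    (if projJ J (projJ J (wᵀ * D) * (g⁻¹)ᵀ) = projJ J (wᵀ * D)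
      then θ (dpair (projJ J (wᵀ * D)) (g⁻¹ - 1)) else 0)
    = (if projJ J (D * (g⁻¹)ᵀ) = D then θ (dpair D (g⁻¹ - 1)) else 0) := by
  have hg' := (U_inv hΦ hcl hg).1
  have hcomm : projJ J (projJ J (wᵀ * D) * (g⁻¹)ᵀ) = projJ J (wᵀ * projJ J (D * (g⁻¹)ᵀ)) :=
    (proj_comm hΦ hcl hw hg' D).symm
  by_cases hfix : projJ J (D * (g⁻¹)ᵀ) = D
  · rw [if_pos (by rw [hcomm, hfix]), if_pos hfix]
    have hMV : g⁻¹ - 1 ∈ patternV J := (mem_U_iff hΦ).mp hg'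
    have e0 : dpair (projJ J (wᵀ * D)) (g⁻¹ - 1) = dpair (wᵀ * D) (g⁻¹ - 1) :=
      dpair_projJ_left hMV _
    have e1 : dpair D (w * (g⁻¹ - 1)) = dpair (wᵀ * D) (g⁻¹ - 1) := dpair_master1 _ _ _
    have e3 : w * (g⁻¹ - 1) = (g⁻¹ - 1) + (w - 1) * (g⁻¹ - 1) := by
      rw [Matrix.sub_mul, Matrix.one_mul]; abel
    have e4 : dpair D ((w - 1) * (g⁻¹ - 1)) = 0 := by
      rw [dpair_master2, ← dpair_projJ_left (J := J) ((mem_U_iff hΦ).mp hw),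
        (fixR_iff hD g⁻¹).mp hfix, dpair_zero_left]
    rw [e0, ← e1, e3, dpair_add_right, e4, add_zero]
  · rw [if_neg ?_, if_neg hfix]
    intro hc
    apply hfix
    rw [hcomm] at hc
    have h2 := congrArg (fun X => projJ J ((w⁻¹)ᵀ * X)) hc
    rwa [sL_cancel hΦ hcl hw (projJ_mem _), sL_cancel hΦ hcl hw hD] at h2

lemma term_eq_L (θ : AddChar F ℂ) {D w g : Matrix (Fin n) (Fin n) F}
    (hD : D ∈ patternV J) (hw : w ∈ patternU J) (hg : g ∈ patternU J) :
    (if projJ J ((g⁻¹)ᵀ * projJ J (D * wᵀ)) = projJ J (D * wᵀ)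
      then θ (dpair (projJ J (D * wᵀ)) (g⁻¹ - 1)) else 0)
    = (if projJ J ((g⁻¹)ᵀ * D) = D then θ (dpair D (g⁻¹ - 1)) else 0) := by
  have hg' := (U_inv hΦ hcl hg).1
  have hcomm : projJ J ((g⁻¹)ᵀ * projJ J (D * wᵀ)) = projJ J (projJ J ((g⁻¹)ᵀ * D) * wᵀ) :=
    proj_comm hΦ hcl hg' hw D
  by_cases hfix : projJ J ((g⁻¹)ᵀ * D) = D
  · rw [if_pos (by rw [hcomm, hfix]), if_pos hfix]
    have hMV : g⁻¹ - 1 ∈ patternV J := (mem_U_iff hΦ).mp hg'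
    have e0 : dpair (projJ J (D * wᵀ)) (g⁻¹ - 1) = dpair (D * wᵀ) (g⁻¹ - 1) :=
      dpair_projJ_left hMV _
    have e1 : dpair D ((g⁻¹ - 1) * w) = dpair (D * wᵀ) (g⁻¹ - 1) := dpair_master2 _ _ _
    have e3 : (g⁻¹ - 1) * w = (g⁻¹ - 1) + (g⁻¹ - 1) * (w - 1) := by
      rw [Matrix.mul_sub, Matrix.mul_one]; abel
    have e4 : dpair D ((g⁻¹ - 1) * (w - 1)) = 0 := by
      rw [dpair_master1, ← dpair_projJ_left (J := J) ((mem_U_iff hΦ).mp hw),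
        (fixL_iff hD g⁻¹).mp hfix, dpair_zero_left]
    rw [e0, ← e1, e3, dpair_add_right, e4, add_zero]
  · rw [if_neg ?_, if_neg hfix]
    intro hc
    apply hfix
    rw [hcomm] at hc
    have h2 := congrArg (fun X => projJ J (X * (w⁻¹)ᵀ)) hc
    rwa [sR_cancel hΦ hcl hw (projJ_mem _), sR_cancel hΦ hcl hw hD] at h2

lemma rchar_eq_of_sL (θ : AddChar F ℂ) {C w : Matrix (Fin n) (Fin n) F}
    (hC : C ∈ patternV J) (hw : w ∈ patternU J) {g : Matrix (Fin n) (Fin n) F}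
    (hg : g ∈ patternU J) :
    rcharFn J θ (projJ J (wᵀ * C)) g = rcharFn J θ C g := by
  rw [rchar_eq_sum, rchar_eq_sum]
  refine Finset.sum_nbij' (fun E => projJ J ((w⁻¹)ᵀ * E)) (fun D => projJ J (wᵀ * D))
    ?_ ?_ ?_ ?_ ?_
  · intro E hE
    obtain ⟨v, hv, rfl⟩ := (mem_orbR_iff hΦ hcl).mp (mem_orbRfin.mp hE)
    refine mem_orbRfin.mpr ((mem_orbR_iff hΦ hcl).mpr ⟨v, hv, ?_⟩)
    beta_reduce
    rw [proj_comm hΦ hcl (U_inv hΦ hcl hw).1 hv (projJ J (wᵀ * C)),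
      sL_cancel hΦ hcl hw hC]
  · intro D hD
    obtain ⟨v, hv, rfl⟩ := (mem_orbR_iff hΦ hcl).mp (mem_orbRfin.mp hD)
    refine mem_orbRfin.mpr ((mem_orbR_iff hΦ hcl).mpr ⟨v, hv, ?_⟩)
    beta_reduce
    rw [proj_comm hΦ hcl hw hv C]
  · intro E hE
    exact sL_cancel' hΦ hcl hw (orbR_sub_V (mem_orbRfin.mp hE))
  · intro D hD
    exact sL_cancel hΦ hcl hw (orbR_sub_V (mem_orbRfin.mp hD))
  · intro E hE
    have hEV := orbR_sub_V (mem_orbRfin.mp hE)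
    conv_lhs => rw [show E = projJ J (wᵀ * projJ J ((w⁻¹)ᵀ * E)) from
      (sL_cancel' hΦ hcl hw hEV).symm]
    exact term_eq_R hΦ hcl θ (projJ_mem _) hw hg

lemma lchar_eq_of_sR (θ : AddChar F ℂ) {C w : Matrix (Fin n) (Fin n) F}
    (hC : C ∈ patternV J) (hw : w ∈ patternU J) {g : Matrix (Fin n) (Fin n) F}
    (hg : g ∈ patternU J) :
    lcharFn J θ (projJ J (C * wᵀ)) g = lcharFn J θ C g := by
  rw [lchar_eq_sum, lchar_eq_sum]
  refine Finset.sum_nbij' (fun E => projJ J (E * (w⁻¹)ᵀ)) (fun D => projJ J (D * wᵀ))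
    ?_ ?_ ?_ ?_ ?_
  · intro E hE
    obtain ⟨u, hu, rfl⟩ := (mem_orbL_iff hΦ hcl).mp (mem_orbLfin.mp hE)
    refine mem_orbLfin.mpr ((mem_orbL_iff hΦ hcl).mpr ⟨u, hu, ?_⟩)
    beta_reduce
    rw [← proj_comm hΦ hcl hu (U_inv hΦ hcl hw).1 (projJ J (C * wᵀ)),
      sR_cancel hΦ hcl hw hC]
  · intro D hD
    obtain ⟨u, hu, rfl⟩ := (mem_orbL_iff hΦ hcl).mp (mem_orbLfin.mp hD)
    refine mem_orbLfin.mpr ((mem_orbL_iff hΦ hcl).mpr ⟨u, hu, ?_⟩)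
    beta_reduce
    rw [← proj_comm hΦ hcl hu hw C]
  · intro E hE
    exact sR_cancel' hΦ hcl hw (orbL_sub_V (mem_orbLfin.mp hE))
  · intro D hD
    exact sR_cancel hΦ hcl hw (orbL_sub_V (mem_orbLfin.mp hD))
  · intro E hE
    have hEV := orbL_sub_V (mem_orbLfin.mp hE)
    conv_lhs => rw [show E = projJ J (projJ J (E * (w⁻¹)ᵀ) * wᵀ) from
      (sR_cancel' hΦ hcl hw hEV).symm]
    exact term_eq_L hΦ hcl θ (projJ_mem _) hw hg

lemma rchar_eq_of_orbR (θ : AddChar F ℂ) {A C : Matrix (Fin n) (Fin n) F}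
    (hA : A ∈ patternV J) (hC : C ∈ orbR J A) (g : Matrix (Fin n) (Fin n) F) :
    rcharFn J θ A g = rcharFn J θ C g := by
  unfold rcharFn
  rw [orbR_eq_of_mem hΦ hcl hA hC]

lemma lchar_eq_of_orbL (θ : AddChar F ℂ) {A C : Matrix (Fin n) (Fin n) F}
    (hA : A ∈ patternV J) (hC : C ∈ orbL J A) (g : Matrix (Fin n) (Fin n) F) :
    lcharFn J θ A g = lcharFn J θ C g := by
  unfold lcharFn
  rw [orbL_eq_of_mem hΦ hcl hA hC]

lemma easy_right (θ : AddChar F ℂ) {A B : Matrix (Fin n) (Fin n) F}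
    (hA : A ∈ patternV J) (hBi : B ∈ orbBi J A) {g : Matrix (Fin n) (Fin n) F}
    (hg : g ∈ patternU J) : rcharFn J θ A g = rcharFn J θ B g := by
  obtain ⟨u, hu, v, hv, rfl⟩ := (mem_orbBi_iff hΦ hcl).mp hBi
  have hC : projJ J (A * vᵀ) ∈ orbR J A := (mem_orbR_iff hΦ hcl).mpr ⟨v, hv, rfl⟩
  rw [rchar_eq_of_orbR hΦ hcl θ hA hC g, ← rchar_eq_of_sL hΦ hcl θ (projJ_mem _) hu hg]

lemma easy_left (θ : AddChar F ℂ) {A B : Matrix (Fin n) (Fin n) F}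
    (hA : A ∈ patternV J) (hBi : B ∈ orbBi J A) {g : Matrix (Fin n) (Fin n) F}
    (hg : g ∈ patternU J) : lcharFn J θ A g = lcharFn J θ B g := by
  obtain ⟨u, hu, v, hv, rfl⟩ := (mem_orbBi_iff' hΦ hcl).mp hBi
  have hC : projJ J (uᵀ * A) ∈ orbL J A := (mem_orbL_iff hΦ hcl).mpr ⟨u, hu, rfl⟩
  rw [lchar_eq_of_orbL hΦ hcl θ hA hC g, ← lchar_eq_of_sR hΦ hcl θ (projJ_mem _) hv hg]

lemma one_add_mem {x : Matrix (Fin n) (Fin n) F} (hx : x ∈ patternV J) :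
    (1 : Matrix (Fin n) (Fin n) F) + x ∈ patternU J := by
  rw [mem_U_iff hΦ]
  have e : (1 : Matrix (Fin n) (Fin n) F) + x - 1 = x := by abel
  rwa [e]

lemma NR_pos_mem {A B : Matrix (Fin n) (Fin n) F}
    (h : (∑ C ∈ orbRfin J A,
      ((Vfin (F := F) J).filter (fun x => projJ J ((1 + x)ᵀ * C) = B)).card) ≠ 0) :
    B ∈ orbBi J A := by
  obtain ⟨C, hC, hcard⟩ : ∃ C ∈ orbRfin J A,
      ((Vfin (F := F) J).filter (fun x => projJ J ((1 + x)ᵀ * C) = B)).card ≠ 0 := by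
    by_contra hc
    push_neg at hc
    exact h (Finset.sum_eq_zero hc)
  obtain ⟨x, hx⟩ := Finset.card_ne_zero.mp hcard
  obtain ⟨hxV, hxB⟩ := Finset.mem_filter.mp hx
  obtain ⟨u, hu, rfl⟩ := mem_orbRfin.mp hC
  have h1x : (1 : Matrix (Fin n) (Fin n) F) + x ∈ patternU J :=
    one_add_mem hΦ hcl (mem_Vfin.mp hxV)
  refine ⟨(1 + x)⁻¹, (U_inv hΦ hcl h1x).1, u, hu, ?_⟩
  rw [U_inv_inv hΦ hcl h1x]
  exact hxB.symm

lemma NL_pos_mem {A B : Matrix (Fin n) (Fin n) F}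
    (h : (∑ C ∈ orbLfin J A,
      ((Vfin (F := F) J).filter (fun y => projJ J (C * (1 + y)ᵀ) = B)).card) ≠ 0) :
    B ∈ orbBi J A := by
  obtain ⟨C, hC, hcard⟩ : ∃ C ∈ orbLfin J A,
      ((Vfin (F := F) J).filter (fun y => projJ J (C * (1 + y)ᵀ) = B)).card ≠ 0 := by
    by_contra hc
    push_neg at hc
    exact h (Finset.sum_eq_zero hc)
  obtain ⟨y, hy⟩ := Finset.card_ne_zero.mp hcard
  obtain ⟨hyV, hyB⟩ := Finset.mem_filter.mp hy
  obtain ⟨u, hu, rfl⟩ := mem_orbLfin.mp hC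
  have h1y : (1 : Matrix (Fin n) (Fin n) F) + y ∈ patternU J :=
    one_add_mem hΦ hcl (mem_Vfin.mp hyV)
  rw [mem_orbBi_iff' hΦ hcl]
  refine ⟨u⁻¹, (U_inv hΦ hcl hu).1, 1 + y, h1y, ?_⟩
  exact hyB.symm

lemma NR_self_ne {B : Matrix (Fin n) (Fin n) F} (hB : B ∈ patternV J) :
    (∑ C ∈ orbRfin J B,
      ((Vfin (F := F) J).filter (fun x => projJ J ((1 + x)ᵀ * C) = B)).card) ≠ 0 := by
  intro h0
  have hBmem : B ∈ orbRfin J B :=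
    mem_orbRfin.mpr ((mem_orbR_iff hΦ hcl).mpr
      ⟨1, U_one hΦ hcl, by rw [Matrix.transpose_one, Matrix.mul_one, projJ_eq_self hB]⟩)
  have h1 := (Finset.sum_eq_zero_iff.mp h0) B hBmem
  have h2 : (0 : Matrix (Fin n) (Fin n) F)
      ∈ (Vfin (F := F) J).filter (fun x => projJ J ((1 + x)ᵀ * B) = B) :=
    Finset.mem_filter.mpr ⟨mem_Vfin.mpr V_zero,
      by rw [add_zero, Matrix.transpose_one, Matrix.one_mul, projJ_eq_self hB]⟩
  exact (Finset.card_ne_zero_of_mem h2) h1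

lemma NL_self_ne {B : Matrix (Fin n) (Fin n) F} (hB : B ∈ patternV J) :
    (∑ C ∈ orbLfin J B,
      ((Vfin (F := F) J).filter (fun y => projJ J (C * (1 + y)ᵀ) = B)).card) ≠ 0 := by
  intro h0
  have hBmem : B ∈ orbLfin J B :=
    mem_orbLfin.mpr ((mem_orbL_iff hΦ hcl).mpr
      ⟨1, U_one hΦ hcl, by rw [Matrix.transpose_one, Matrix.one_mul, projJ_eq_self hB]⟩)
  have h1 := (Finset.sum_eq_zero_iff.mp h0) B hBmem
  have h2 : (0 : Matrix (Fin n) (Fin n) F)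
      ∈ (Vfin (F := F) J).filter (fun y => projJ J (B * (1 + y)ᵀ) = B) :=
    Finset.mem_filter.mpr ⟨mem_Vfin.mpr V_zero,
      by rw [add_zero, Matrix.transpose_one, Matrix.mul_one, projJ_eq_self hB]⟩
  exact (Finset.card_ne_zero_of_mem h2) h1

end Main
end SAux

/-- For J ⊆ Φ⁺ closed and A, B ∈ V_J the following are equivalent:
(i) ℂO_A^r ≅ ℂO_B^r as right ℂU_J-modules (equivalently, since ℂU_J is semisimple, the
right orbit characters agree); (ii) [B] ∈ O_A^bi; (iii) ℂO_A^l ≅ ℂO_B^l as left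
ℂU_J-modules (equivalently the left orbit characters agree). -/
theorem stmt_12 {F : Type} [Field F] [Fintype F] {n : ℕ}
    (J : Set (Fin n × Fin n))
    (hΦ : ∀ p ∈ J, p.1 < p.2)
    (hcl : ∀ i j k : Fin n, (i, j) ∈ J → (j, k) ∈ J → (i, k) ∈ J)
    (θ : AddChar F ℂ) (hθ : θ ≠ 1)
    (A B : Matrix (Fin n) (Fin n) F) (hA : A ∈ patternV J) (hB : B ∈ patternV J) :
    ((∀ g ∈ patternU J, rcharFn J θ A g = rcharFn J θ B g) ↔ B ∈ orbBi J A) ∧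
    (B ∈ orbBi J A ↔ (∀ g ∈ patternU J, lcharFn J θ A g = lcharFn J θ B g)) := by
  refine ⟨⟨?_, ?_⟩, ?_, ?_⟩
  · intro h
    have key := SAux.Phi_right hΦ hcl θ hθ hA hB
    have keyB := SAux.Phi_right hΦ hcl θ hθ hB hB
    have heq : (∑ g ∈ SAux.Ufin (F := F) J, rcharFn J θ A g * θ (dpair (-B) (g⁻¹ - 1)))
        = ∑ g ∈ SAux.Ufin (F := F) J, rcharFn J θ B g * θ (dpair (-B) (g⁻¹ - 1)) :=
      Finset.sum_congr rfl fun g hg => by rw [h g (SAux.mem_Ufin.mp hg)]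
    rw [key, keyB, Nat.cast_inj] at heq
    apply SAux.NR_pos_mem hΦ hcl
    rw [heq]
    exact SAux.NR_self_ne hΦ hcl hB
  · intro hBi g hg
    exact SAux.easy_right hΦ hcl θ hA hBi hg
  · intro hBi g hg
    exact SAux.easy_left hΦ hcl θ hA hBi hg
  · intro h
    have key := SAux.Phi_left hΦ hcl θ hθ hA hB
    have keyB := SAux.Phi_left hΦ hcl θ hθ hB hB
    have heq : (∑ g ∈ SAux.Ufin (F := F) J, lcharFn J θ A g * θ (dpair (-B) (g⁻¹ - 1)))
        = ∑ g ∈ SAux.Ufin (F := F) J, lcharFn J θ B g * θ (dpair (-B) (g⁻¹ - 1)) :=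
      Finset.sum_congr rfl fun g hg => by rw [h g (SAux.mem_Ufin.mp hg)]
    rw [key, keyB, Nat.cast_inj] at heq
    apply SAux.NL_pos_mem hΦ hcl
    rw [heq]
    exact SAux.NL_self_ne hΦ hcl hB
end
end

section
/- Let q be a prime power, J ⊆ Φ⁺ closed, A ∈ V_J, and let χ_A be the supercharacter of U_J afforded by the right ℂU_J-module ℂO_{−A}^r (equivalently by the right ideal f*([−A])ℂU_J of ℂU_J). If g ∈ U_J lies in the superclass K = E + U_J.(g − E).U_J, then χ_A(g) = (|[A].U_J| / |U_J.[A].U_J|) · Σ_{[B] ∈ U_J.[A].U_J} [B](f(g)) = (|[A].U_J| / |K|) · Σ_{h ∈ K} [A](f(h)), where f(h) = h − E. -/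
open Matrix
open scoped Classical

noncomputable section

variable {F : Type} [Field F] [Fintype F] {n : ℕ}

set_option linter.unusedSectionVars false
set_option linter.unusedVariables false
set_option maxHeartbeats 3200000

namespace SC

variable (J : Set (Fin n × Fin n))

lemma V_zero : (0 : Matrix (Fin n) (Fin n) F) ∈ patternV J := fun i j _ => rfl

lemma V_add {a b : Matrix (Fin n) (Fin n) F} (ha : a ∈ patternV J) (hb : b ∈ patternV J) :
    a + b ∈ patternV J := fun i j h => by
  simp [Matrix.add_apply, ha i j h, hb i j h]

lemma V_neg {a : Matrix (Fin n) (Fin n) F} (ha : a ∈ patternV J) : -a ∈ patternV J :=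
  fun i j h => by simp [Matrix.neg_apply, ha i j h]

lemma V_smul {a : Matrix (Fin n) (Fin n) F} (c : F) (ha : a ∈ patternV J) :
    c • a ∈ patternV J := fun i j h => by simp [Matrix.smul_apply, ha i j h]

lemma V_mul (hcl : ∀ i j k : Fin n, (i, j) ∈ J → (j, k) ∈ J → (i, k) ∈ J)
    {a b : Matrix (Fin n) (Fin n) F} (ha : a ∈ patternV J) (hb : b ∈ patternV J) :
    a * b ∈ patternV J := by
  intro i j h
  rw [Matrix.mul_apply]
  refine Finset.sum_eq_zero fun k _ => ?_
  by_cases h1 : (i, k) ∈ J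
  · by_cases h2 : (k, j) ∈ J
    · exact absurd (hcl i k j h1 h2) h
    · simp [hb k j h2]
  · simp [ha i k h1]

lemma projJ_mem (X : Matrix (Fin n) (Fin n) F) : projJ J X ∈ patternV J := by
  intro i j h; simp [projJ, h]

lemma projJ_eq_self {X : Matrix (Fin n) (Fin n) F} (hX : X ∈ patternV J) : projJ J X = X := by
  ext i j
  by_cases h : (i, j) ∈ J
  · simp [projJ, h]
  · simp [projJ, h, hX i j h]

lemma projJ_neg (X : Matrix (Fin n) (Fin n) F) : projJ J (-X) = -projJ J X := by
  ext i j
  by_cases h : (i, j) ∈ J <;> simp [projJ, h]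

lemma dpair_trace (A B : Matrix (Fin n) (Fin n) F) : dpair A B = Matrix.trace (Aᵀ * B) := by
  unfold dpair Matrix.trace
  rw [Finset.sum_comm]
  refine Finset.sum_congr rfl fun j _ => ?_
  simp [Matrix.mul_apply, Matrix.diag]

lemma dpair_proj {B : Matrix (Fin n) (Fin n) F} (hB : B ∈ patternV J)
    (X : Matrix (Fin n) (Fin n) F) : dpair (projJ J X) B = dpair X B := by
  unfold dpair
  refine Finset.sum_congr rfl fun i _ => Finset.sum_congr rfl fun j _ => ?_
  by_cases h : (i, j) ∈ J
  · simp [projJ, h]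
  · simp [projJ, h, hB i j h]

lemma dpair_mul_right (X C w : Matrix (Fin n) (Fin n) F) :
    dpair (X * wᵀ) C = dpair X (C * w) := by
  rw [dpair_trace, dpair_trace, Matrix.transpose_mul, Matrix.transpose_transpose,
    Matrix.mul_assoc, Matrix.trace_mul_comm, Matrix.mul_assoc]

lemma dpair_mul_left (X C w : Matrix (Fin n) (Fin n) F) :
    dpair (wᵀ * X) C = dpair X (w * C) := by
  rw [dpair_trace, dpair_trace, Matrix.transpose_mul, Matrix.transpose_transpose,
    Matrix.mul_assoc]

lemma dpair_add_right (X a b : Matrix (Fin n) (Fin n) F) :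
    dpair X (a + b) = dpair X a + dpair X b := by
  unfold dpair
  rw [← Finset.sum_add_distrib]
  refine Finset.sum_congr rfl fun i _ => ?_
  rw [← Finset.sum_add_distrib]
  refine Finset.sum_congr rfl fun j _ => ?_
  simp [Matrix.add_apply, mul_add]

lemma dpair_neg_left (X B : Matrix (Fin n) (Fin n) F) : dpair (-X) B = -dpair X B := by
  simp [dpair, Finset.sum_neg_distrib]

lemma dpair_neg_right (X B : Matrix (Fin n) (Fin n) F) : dpair X (-B) = -dpair X B := by
  simp [dpair, Finset.sum_neg_distrib]

lemma dpair_std (X : Matrix (Fin n) (Fin n) F) (i j : Fin n) :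
    dpair X (Matrix.single i j 1) = X i j := by
  unfold dpair
  rw [Finset.sum_eq_single i]
  · rw [Finset.sum_eq_single j]
    · simp [Matrix.single]
    · intro b _ hb; simp [Matrix.single, hb.symm]
    · simp
  · intro b _ hb
    refine Finset.sum_eq_zero fun k _ => ?_
    simp [Matrix.single, hb.symm]
  · simp

lemma std_mem {i j : Fin n} (hij : (i, j) ∈ J) :
    (Matrix.single i j (1 : F)) ∈ patternV J := by
  intro k l h
  have : ¬(i = k ∧ j = l) := by rintro ⟨rfl, rfl⟩; exact h hij
  simp [Matrix.single, this]

lemma dpair_nondeg {X Y : Matrix (Fin n) (Fin n) F} (hX : X ∈ patternV J) (hY : Y ∈ patternV J)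
    (h : ∀ C ∈ patternV J, dpair X C = dpair Y C) : X = Y := by
  ext i j
  by_cases hij : (i, j) ∈ J
  · have := h _ (std_mem J hij)
    rwa [dpair_std, dpair_std] at this
  · rw [hX i j hij, hY i j hij]


lemma sub_one_mem_V {u : Matrix (Fin n) (Fin n) F} (hu : u ∈ patternU J) :
    u - 1 ∈ patternV J := by
  intro i j h
  by_cases hij : i = j
  · subst hij; simp [Matrix.sub_apply, Matrix.one_apply, hu.1 i]
  · simp [Matrix.sub_apply, Matrix.one_apply, hij, hu.2 i j hij h]

lemma one_add_mem_U (hΦ : ∀ p ∈ J, p.1 < p.2) {a : Matrix (Fin n) (Fin n) F}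
    (ha : a ∈ patternV J) : 1 + a ∈ patternU J := by
  constructor
  · intro i
    have : (i, i) ∉ J := fun h => lt_irrefl _ (hΦ _ h)
    simp [Matrix.add_apply, Matrix.one_apply, ha i i this]
  · intro i j hij h
    simp [Matrix.add_apply, Matrix.one_apply, hij, ha i j h]

lemma mem_U_iff (hΦ : ∀ p ∈ J, p.1 < p.2) {u : Matrix (Fin n) (Fin n) F} :
    u ∈ patternU J ↔ u - 1 ∈ patternV J := by
  refine ⟨sub_one_mem_V J, fun h => ?_⟩
  have := one_add_mem_U J hΦ h
  simpa using this

lemma strict_of_V (hΦ : ∀ p ∈ J, p.1 < p.2) {a : Matrix (Fin n) (Fin n) F}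
    (ha : a ∈ patternV J) : ∀ i j : Fin n, ¬ i < j → a i j = 0 := by
  intro i j h
  exact ha i j fun hij => h (hΦ _ hij)

lemma pow_entry_zero {a : Matrix (Fin n) (Fin n) F}
    (h : ∀ i j : Fin n, ¬ i < j → a i j = 0) :
    ∀ (k : ℕ) (i j : Fin n), ¬ ((i : ℕ) + k ≤ (j : ℕ)) → (a ^ k) i j = 0 := by
  intro k
  induction k with
  | zero =>
    intro i j hij
    have : i ≠ j := fun e => hij (by simp [e])
    simp [Matrix.one_apply, this]
  | succ k ih =>
    intro i j hij
    rw [pow_succ, Matrix.mul_apply]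
    refine Finset.sum_eq_zero fun m _ => ?_
    by_cases h1 : (i : ℕ) + k ≤ (m : ℕ)
    · by_cases h2 : m < j
      · exact absurd (by omega : (i:ℕ) + (k+1) ≤ (j:ℕ)) hij
      · simp [h m j h2]
    · simp [ih i m h1]

lemma nilpotent_of_strict {a : Matrix (Fin n) (Fin n) F}
    (h : ∀ i j : Fin n, ¬ i < j → a i j = 0) : a ^ n = 0 := by
  ext i j
  rw [pow_entry_zero h n i j (by omega)]
  simp

lemma V_pow (hcl : ∀ i j k : Fin n, (i, j) ∈ J → (j, k) ∈ J → (i, k) ∈ J)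
    {a : Matrix (Fin n) (Fin n) F} (ha : a ∈ patternV J) :
    ∀ k : ℕ, 1 ≤ k → a ^ k ∈ patternV J := by
  intro k
  induction k with
  | zero => intro h; omega
  | succ k ih =>
    intro _
    rcases Nat.eq_or_lt_of_le (Nat.one_le_iff_ne_zero.mpr (Nat.succ_ne_zero k)) with h | h
    · rw [pow_succ]
      rcases Nat.eq_zero_or_pos k with rfl | hk
      · simpa using ha
      · exact V_mul J hcl (ih hk) ha
    · rw [pow_succ]
      rcases Nat.eq_zero_or_pos k with rfl | hk
      · simpa using ha
      · exact V_mul J hcl (ih hk) ha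

def binv (u : Matrix (Fin n) (Fin n) F) : Matrix (Fin n) (Fin n) F :=
  ∑ i ∈ Finset.range n, (-(u - 1)) ^ i

lemma neg_pow_n (hΦ : ∀ p ∈ J, p.1 < p.2) {u : Matrix (Fin n) (Fin n) F}
    (hu : u ∈ patternU J) : (-(u - 1)) ^ n = 0 := by
  apply nilpotent_of_strict
  intro i j h
  simp [strict_of_V J hΦ (sub_one_mem_V J hu) i j h]

lemma mul_binv (hΦ : ∀ p ∈ J, p.1 < p.2) {u : Matrix (Fin n) (Fin n) F}
    (hu : u ∈ patternU J) : u * binv u = 1 := by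
  have h := mul_geom_sum (-(u - 1)) n
  rw [neg_pow_n J hΦ hu] at h
  have e : -(u - 1) - 1 = -u := by abel
  rw [e] at h
  unfold binv
  have : u * (∑ i ∈ Finset.range n, (-(u-1)) ^ i)
      = -(-u * (∑ i ∈ Finset.range n, (-(u-1)) ^ i)) := by
    rw [neg_mul, neg_neg]
  rw [this, h]
  simp

lemma binv_mul (hΦ : ∀ p ∈ J, p.1 < p.2) {u : Matrix (Fin n) (Fin n) F}
    (hu : u ∈ patternU J) : binv u * u = 1 := by
  have h := geom_sum_mul (-(u - 1)) n
  rw [neg_pow_n J hΦ hu] at h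
  have e : -(u - 1) - 1 = -u := by abel
  rw [e] at h
  unfold binv
  have : (∑ i ∈ Finset.range n, (-(u-1)) ^ i) * u
      = -((∑ i ∈ Finset.range n, (-(u-1)) ^ i) * (-u)) := by
    rw [mul_neg, neg_neg]
  rw [this, h]
  simp


lemma binv_sub_one_mem (hΦ : ∀ p ∈ J, p.1 < p.2)
    (hcl : ∀ i j k : Fin n, (i, j) ∈ J → (j, k) ∈ J → (i, k) ∈ J)
    {u : Matrix (Fin n) (Fin n) F} (hu : u ∈ patternU J) :
    binv u - 1 ∈ patternV J := by
  intro i j h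
  have hn : 0 < n := i.pos
  rw [Matrix.sub_apply, binv, Matrix.sum_apply]
  rw [Finset.range_eq_Ico, Finset.sum_eq_sum_Ico_succ_bot hn]
  have hx : ∀ k : ℕ, 1 ≤ k → ((-(u - 1)) ^ k) i j = 0 := fun k hk =>
    V_pow J hcl (V_neg J (sub_one_mem_V J hu)) k hk i j h
  rw [Finset.sum_eq_zero fun k hk => hx k (Finset.mem_Ico.mp hk).1]
  simp [Matrix.one_apply]

lemma binv_mem_U (hΦ : ∀ p ∈ J, p.1 < p.2)
    (hcl : ∀ i j k : Fin n, (i, j) ∈ J → (j, k) ∈ J → (i, k) ∈ J)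
    {u : Matrix (Fin n) (Fin n) F} (hu : u ∈ patternU J) : binv u ∈ patternU J := by
  rw [mem_U_iff J hΦ]
  exact binv_sub_one_mem J hΦ hcl hu

lemma U_inv_eq (hΦ : ∀ p ∈ J, p.1 < p.2) {u : Matrix (Fin n) (Fin n) F}
    (hu : u ∈ patternU J) : u⁻¹ = binv u :=
  Matrix.inv_eq_right_inv (mul_binv J hΦ hu)

lemma U_inv_mem (hΦ : ∀ p ∈ J, p.1 < p.2)
    (hcl : ∀ i j k : Fin n, (i, j) ∈ J → (j, k) ∈ J → (i, k) ∈ J)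
    {u : Matrix (Fin n) (Fin n) F} (hu : u ∈ patternU J) : u⁻¹ ∈ patternU J := by
  rw [U_inv_eq J hΦ hu]; exact binv_mem_U J hΦ hcl hu

lemma U_mul_inv_self (hΦ : ∀ p ∈ J, p.1 < p.2) {u : Matrix (Fin n) (Fin n) F}
    (hu : u ∈ patternU J) : u * u⁻¹ = 1 := by
  rw [U_inv_eq J hΦ hu]; exact mul_binv J hΦ hu

lemma U_inv_mul_self (hΦ : ∀ p ∈ J, p.1 < p.2) {u : Matrix (Fin n) (Fin n) F}
    (hu : u ∈ patternU J) : u⁻¹ * u = 1 := by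
  rw [U_inv_eq J hΦ hu]; exact binv_mul J hΦ hu

lemma U_mul_mem (hcl : ∀ i j k : Fin n, (i, j) ∈ J → (j, k) ∈ J → (i, k) ∈ J)
    {u v : Matrix (Fin n) (Fin n) F} (hu : u ∈ patternU J) (hv : v ∈ patternU J) :
    u * v - 1 ∈ patternV J := by
  have e : u * v - 1 = (u - 1) * (v - 1) + ((u - 1) + (v - 1)) := by noncomm_ring
  rw [e]
  exact V_add J (V_mul J hcl (sub_one_mem_V J hu) (sub_one_mem_V J hv))
    (V_add J (sub_one_mem_V J hu) (sub_one_mem_V J hv))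

lemma one_mem_U : (1 : Matrix (Fin n) (Fin n) F) ∈ patternU J :=
  ⟨fun i => Matrix.one_apply_eq i, fun i j hij _ => Matrix.one_apply_ne hij⟩

def UGrp' (hΦ : ∀ p ∈ J, p.1 < p.2)
    (hcl : ∀ i j k : Fin n, (i, j) ∈ J → (j, k) ∈ J → (i, k) ∈ J) :
    Subgroup (Matrix (Fin n) (Fin n) F)ˣ where
  carrier := {x | (x : Matrix (Fin n) (Fin n) F) ∈ patternU J}
  one_mem' := by simpa using one_mem_U J
  mul_mem' := by
    intro a b ha hb
    have := U_mul_mem J hcl ha hb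
    rw [← mem_U_iff J hΦ] at this
    simpa using this
  inv_mem' := by
    intro a ha
    have : ((a⁻¹ : (Matrix (Fin n) (Fin n) F)ˣ) : Matrix (Fin n) (Fin n) F)
        = (a : Matrix (Fin n) (Fin n) F)⁻¹ := Matrix.coe_units_inv a
    simp only [Set.mem_setOf_eq] at ha ⊢
    rw [this]
    exact U_inv_mem J hΦ hcl ha


lemma dpair_sub_right (X a b : Matrix (Fin n) (Fin n) F) :
    dpair X (a - b) = dpair X a - dpair X b := by
  unfold dpair
  rw [← Finset.sum_sub_distrib]
  refine Finset.sum_congr rfl fun i _ => ?_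
  rw [← Finset.sum_sub_distrib]
  exact Finset.sum_congr rfl fun j _ => by simp [Matrix.sub_apply, mul_sub]

lemma dpair_smul_right (X : Matrix (Fin n) (Fin n) F) (c : F) (a : Matrix (Fin n) (Fin n) F) :
    dpair X (c • a) = c * dpair X a := by
  unfold dpair
  rw [Finset.mul_sum]
  refine Finset.sum_congr rfl fun i _ => ?_
  rw [Finset.mul_sum]
  refine Finset.sum_congr rfl fun j _ => ?_
  simp [Matrix.smul_apply]
  ring

lemma V_mul_U (hΦ : ∀ p ∈ J, p.1 < p.2)
    (hcl : ∀ i j k : Fin n, (i, j) ∈ J → (j, k) ∈ J → (i, k) ∈ J)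
    {C u : Matrix (Fin n) (Fin n) F} (hC : C ∈ patternV J) (hu : u ∈ patternU J) :
    C * u ∈ patternV J := by
  have e : C * u = C + C * (u - 1) := by noncomm_ring
  rw [e]
  exact V_add J hC (V_mul J hcl hC (sub_one_mem_V J hu))

lemma U_mul_V (hΦ : ∀ p ∈ J, p.1 < p.2)
    (hcl : ∀ i j k : Fin n, (i, j) ∈ J → (j, k) ∈ J → (i, k) ∈ J)
    {C u : Matrix (Fin n) (Fin n) F} (hC : C ∈ patternV J) (hu : u ∈ patternU J) :
    u * C ∈ patternV J := by
  have e : u * C = C + (u - 1) * C := by noncomm_ring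
  rw [e]
  exact V_add J hC (V_mul J hcl (sub_one_mem_V J hu) hC)

def ract (B u : Matrix (Fin n) (Fin n) F) : Matrix (Fin n) (Fin n) F :=
  projJ J (B * (u⁻¹)ᵀ)

def lact (u B : Matrix (Fin n) (Fin n) F) : Matrix (Fin n) (Fin n) F :=
  projJ J ((u⁻¹)ᵀ * B)

lemma dpair_ract (B u : Matrix (Fin n) (Fin n) F) {C : Matrix (Fin n) (Fin n) F}
    (hC : C ∈ patternV J) : dpair (ract J B u) C = dpair B (C * u⁻¹) := by
  rw [ract, dpair_proj J hC, dpair_mul_right]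

lemma dpair_lact (u B : Matrix (Fin n) (Fin n) F) {C : Matrix (Fin n) (Fin n) F}
    (hC : C ∈ patternV J) : dpair (lact J u B) C = dpair B (u⁻¹ * C) := by
  rw [lact, dpair_proj J hC, dpair_mul_left]

lemma ract_mem (B u : Matrix (Fin n) (Fin n) F) : ract J B u ∈ patternV J := projJ_mem J _

lemma lact_mem (u B : Matrix (Fin n) (Fin n) F) : lact J u B ∈ patternV J := projJ_mem J _

variable {hΦ : ∀ p ∈ J, p.1 < p.2}

lemma ract_ract (hΦ : ∀ p ∈ J, p.1 < p.2)
    (hcl : ∀ i j k : Fin n, (i, j) ∈ J → (j, k) ∈ J → (i, k) ∈ J)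
    (B : Matrix (Fin n) (Fin n) F) {u v : Matrix (Fin n) (Fin n) F}
    (hu : u ∈ patternU J) (hv : v ∈ patternU J) :
    ract J (ract J B u) v = ract J B (u * v) := by
  refine dpair_nondeg J (ract_mem J _ _) (ract_mem J _ _) fun C hC => ?_
  rw [dpair_ract J _ _ hC, dpair_ract J _ _ hC,
    dpair_ract J _ _ (V_mul_U J hΦ hcl hC (U_inv_mem J hΦ hcl hv)),
    Matrix.mul_inv_rev, Matrix.mul_assoc]

lemma ract_one (B : Matrix (Fin n) (Fin n) F) (hB : B ∈ patternV J) : ract J B 1 = B := by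
  have h1 : (1 : Matrix (Fin n) (Fin n) F)⁻¹ = 1 := Matrix.inv_eq_right_inv (one_mul 1)
  rw [ract, h1, Matrix.transpose_one, Matrix.mul_one, projJ_eq_self J hB]

lemma lact_lact (hΦ : ∀ p ∈ J, p.1 < p.2)
    (hcl : ∀ i j k : Fin n, (i, j) ∈ J → (j, k) ∈ J → (i, k) ∈ J)
    (B : Matrix (Fin n) (Fin n) F) {u v : Matrix (Fin n) (Fin n) F}
    (hu : u ∈ patternU J) (hv : v ∈ patternU J) :
    lact J u (lact J v B) = lact J (u * v) B := by
  refine dpair_nondeg J (lact_mem J _ _) (lact_mem J _ _) fun C hC => ?_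
  rw [dpair_lact J _ _ hC, dpair_lact J _ _ hC,
    dpair_lact J _ _ (U_mul_V J hΦ hcl hC (U_inv_mem J hΦ hcl hu)),
    Matrix.mul_inv_rev, Matrix.mul_assoc]

lemma lact_ract_comm (hΦ : ∀ p ∈ J, p.1 < p.2)
    (hcl : ∀ i j k : Fin n, (i, j) ∈ J → (j, k) ∈ J → (i, k) ∈ J)
    (B : Matrix (Fin n) (Fin n) F) {u v : Matrix (Fin n) (Fin n) F}
    (hu : u ∈ patternU J) (hv : v ∈ patternU J) :
    ract J (lact J u B) v = lact J u (ract J B v) := by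
  refine dpair_nondeg J (ract_mem J _ _) (lact_mem J _ _) fun C hC => ?_
  rw [dpair_ract J _ _ hC, dpair_lact J _ _ (V_mul_U J hΦ hcl hC (U_inv_mem J hΦ hcl hv)),
    dpair_lact J _ _ hC, dpair_ract J _ _ (U_mul_V J hΦ hcl hC (U_inv_mem J hΦ hcl hu)),
    Matrix.mul_assoc]

lemma fixR_iff (hΦ : ∀ p ∈ J, p.1 < p.2)
    (hcl : ∀ i j k : Fin n, (i, j) ∈ J → (j, k) ∈ J → (i, k) ∈ J)
    {g : Matrix (Fin n) (Fin n) F} (hg : g ∈ patternU J)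
    {C : Matrix (Fin n) (Fin n) F} (hC : C ∈ patternV J) :
    projJ J (C * (g⁻¹)ᵀ) = C ↔ ∀ a ∈ patternV J, dpair C (a * (g - 1)) = 0 := by
  constructor
  · intro h a ha
    have key : ∀ b ∈ patternV J, dpair C (b * g⁻¹) = dpair C b := by
      intro b hb
      calc dpair C (b * g⁻¹) = dpair (C * (g⁻¹)ᵀ) b := (dpair_mul_right _ _ _).symm
        _ = dpair (projJ J (C * (g⁻¹)ᵀ)) b := (dpair_proj J hb _).symm
        _ = dpair C b := by rw [h]
    have h2 := key (a * g) (V_mul_U J hΦ hcl ha hg)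
    rw [Matrix.mul_assoc, U_mul_inv_self J hΦ hg, Matrix.mul_one] at h2
    have e : a * (g - 1) = a * g - a := by noncomm_ring
    rw [e, dpair_sub_right, h2]
    ring
  · intro h
    have key : ∀ a ∈ patternV J, dpair C (a * g) = dpair C a := by
      intro a ha
      have := h a ha
      have e : a * (g - 1) = a * g - a := by noncomm_ring
      rw [e, dpair_sub_right] at this
      linear_combination this
    refine dpair_nondeg J (projJ_mem J _) hC fun b hb => ?_
    have hbg : b * g⁻¹ ∈ patternV J := V_mul_U J hΦ hcl hb (U_inv_mem J hΦ hcl hg)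
    have h2 := key (b * g⁻¹) hbg
    rw [Matrix.mul_assoc, U_inv_mul_self J hΦ hg, Matrix.mul_one] at h2
    rw [dpair_proj J hb, dpair_mul_right, h2]

lemma charSum (θ : AddChar F ℂ) (hθ : θ ≠ 1) (ψ : Matrix (Fin n) (Fin n) F → F)
    (hadd : ∀ a b, ψ (a + b) = ψ a + ψ b) (hsmul : ∀ (c : F) a, ψ (c • a) = c * ψ a)
    (hnz : ∃ a ∈ patternV J, ψ a ≠ 0) :
    ∑ a ∈ (patternV J).toFinset, θ (ψ a) = 0 := by
  obtain ⟨c, hc⟩ := AddChar.ne_one_iff.mp hθ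
  obtain ⟨a₀, ha₀, hψ⟩ := hnz
  set t := (c / ψ a₀) • a₀ with ht
  have htV : t ∈ patternV J := V_smul J _ ha₀
  have hψt : θ (ψ t) = θ c := by
    rw [ht, hsmul, div_mul_cancel₀ _ hψ]
  have htrans : ∑ a ∈ (patternV J).toFinset, θ (ψ a)
      = ∑ a ∈ (patternV J).toFinset, θ (ψ (a + t)) := by
    apply Finset.sum_nbij' (i := fun a => a - t) (j := fun a => a + t)
    · intro a ha
      rw [Set.mem_toFinset] at ha ⊢
      have e : a - t = a + (-t) := by abel
      rw [e]
      exact V_add J ha (V_neg J htV)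
    · intro a ha
      rw [Set.mem_toFinset] at ha ⊢
      exact V_add J ha htV
    · intro a _; abel
    · intro a _; abel
    · intro a _
      have e : a - t + t = a := by abel
      rw [e]
  have : ∑ a ∈ (patternV J).toFinset, θ (ψ (a + t))
      = θ (ψ t) * ∑ a ∈ (patternV J).toFinset, θ (ψ a) := by
    rw [Finset.mul_sum]
    refine Finset.sum_congr rfl fun a _ => ?_
    rw [hadd, AddChar.map_add_eq_mul]
    ring
  rw [this, hψt] at htrans
  have hz : (1 - θ c) * ∑ a ∈ (patternV J).toFinset, θ (ψ a) = 0 := by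
    linear_combination htrans
  rcases mul_eq_zero.mp hz with h | h
  · exact absurd (by linear_combination -h : θ c = 1) hc
  · exact h



lemma fix_key (hΦ : ∀ p ∈ J, p.1 < p.2)
    {g : Matrix (Fin n) (Fin n) F}
    {C : Matrix (Fin n) (Fin n) F} (hfix : projJ J (C * (g⁻¹)ᵀ) = C) :
    ∀ b ∈ patternV J, dpair C (b * g⁻¹) = dpair C b := by
  intro b hb
  calc dpair C (b * g⁻¹) = dpair (C * (g⁻¹)ᵀ) b := (dpair_mul_right _ _ _).symm
    _ = dpair (projJ J (C * (g⁻¹)ᵀ)) b := (dpair_proj J hb _).symm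
    _ = dpair C b := by rw [hfix]

end SC

namespace SC

lemma fiber_card_const {G β : Type} [Group G] [Fintype G] [DecidableEq β] (f : G → β)
    (h : ∀ p q : G, f p = f q → ∀ r, f (p * r) = f (q * r)) (p : G) :
    (Finset.univ.filter fun u : G => f u = f p).card
      = (Finset.univ.filter fun u : G => f u = f 1).card := by
  apply Finset.card_bij (fun u _ => u * p⁻¹)
  · intro a ha
    simp only [Finset.mem_filter, Finset.mem_univ, true_and] at ha ⊢
    have := h a p ha p⁻¹
    simpa using this
  · intro a ha b hb hab
    exact mul_right_cancel hab
  · intro b hb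
    simp only [Finset.mem_filter, Finset.mem_univ, true_and] at hb
    refine ⟨b * p, ?_, by group⟩
    simp only [Finset.mem_filter, Finset.mem_univ, true_and]
    have := h b 1 hb p
    simpa using this

lemma const_fiber {G β : Type} [Group G] [Fintype G] [DecidableEq β] (f : G → β) (Ff : β → ℂ)
    (h : ∀ p q : G, f p = f q → ∀ r, f (p * r) = f (q * r)) :
    ((Finset.image f Finset.univ).card : ℂ) * ∑ u : G, Ff (f u)
      = (Fintype.card G : ℂ) * ∑ b ∈ Finset.image f Finset.univ, Ff b := by
  set I := Finset.image f Finset.univ with hI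
  set c := (Finset.univ.filter fun u : G => f u = f 1).card with hc
  have hfib : ∀ b ∈ I, (Finset.univ.filter fun u : G => f u = b).card = c := by
    intro b hb
    obtain ⟨p, _, rfl⟩ := Finset.mem_image.mp hb
    exact fiber_card_const f h p
  have hmaps : ∀ u : G, u ∈ Finset.univ → f u ∈ I := fun u _ =>
    Finset.mem_image_of_mem f (Finset.mem_univ u)
  have hsum : ∑ u : G, Ff (f u) = (c : ℂ) * ∑ b ∈ I, Ff b := by
    rw [← Finset.sum_fiberwise_of_maps_to hmaps fun u => Ff (f u)]
    rw [Finset.mul_sum]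
    refine Finset.sum_congr rfl fun b hb => ?_
    have : ∀ u ∈ Finset.univ.filter fun u : G => f u = b, Ff (f u) = Ff b := by
      intro u hu
      rw [(Finset.mem_filter.mp hu).2]
    rw [Finset.sum_congr rfl this, Finset.sum_const, hfib b hb]
    simp
  have hcardG : (Fintype.card G : ℂ) = (I.card : ℂ) * (c : ℂ) := by
    have : Fintype.card G = ∑ b ∈ I, (Finset.univ.filter fun u : G => f u = b).card := by
      rw [← Finset.card_univ]
      exact Finset.card_eq_sum_card_fiberwise hmaps
    rw [this]
    rw [Finset.sum_congr rfl hfib, Finset.sum_const, smul_eq_mul]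
    push_cast
    ring
  rw [hsum, hcardG]
  ring


variable (J : Set (Fin n × Fin n))

def UGrp (F : Type) [Field F] [Fintype F] {n : ℕ} (J : Set (Fin n × Fin n))
    (hΦ : ∀ p ∈ J, p.1 < p.2)
    (hcl : ∀ i j k : Fin n, (i, j) ∈ J → (j, k) ∈ J → (i, k) ∈ J) :
    Subgroup (Matrix (Fin n) (Fin n) F)ˣ := UGrp' J hΦ hcl

lemma UGrp_mem_iff (hΦ : ∀ p ∈ J, p.1 < p.2)
    (hcl : ∀ i j k : Fin n, (i, j) ∈ J → (j, k) ∈ J → (i, k) ∈ J)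
    (x : (Matrix (Fin n) (Fin n) F)ˣ) :
    x ∈ UGrp F J hΦ hcl ↔ (x : Matrix (Fin n) (Fin n) F) ∈ patternU J := Iff.rfl

section grp
variable (hΦ : ∀ p ∈ J, p.1 < p.2)
    (hcl : ∀ i j k : Fin n, (i, j) ∈ J → (j, k) ∈ J → (i, k) ∈ J)

abbrev GT (F : Type) [Field F] [Fintype F] {n : ℕ} (J : Set (Fin n × Fin n)) (hΦ : ∀ p ∈ J, p.1 < p.2) (hcl : ∀ i j k : Fin n, (i, j) ∈ J → (j, k) ∈ J → (i, k) ∈ J) := ↥(UGrp F J hΦ hcl)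

def cm {F : Type} [Field F] [Fintype F] {n : ℕ} {J : Set (Fin n × Fin n)} {hΦ : ∀ p ∈ J, p.1 < p.2} {hcl : ∀ i j k : Fin n, (i, j) ∈ J → (j, k) ∈ J → (i, k) ∈ J} (x : GT F J hΦ hcl) : Matrix (Fin n) (Fin n) F := ((x : (Matrix (Fin n) (Fin n) F)ˣ) : Matrix (Fin n) (Fin n) F)

lemma cm_mem (x : GT F J hΦ hcl) : cm x ∈ patternU J :=
  (UGrp_mem_iff J hΦ hcl _).mp x.2

lemma cm_mul (x y : GT F J hΦ hcl) : cm (x * y) = cm x * cm y := rfl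

lemma cm_one : cm (1 : GT F J hΦ hcl) = 1 := rfl

lemma cm_inv (x : GT F J hΦ hcl) : cm x⁻¹ = (cm x)⁻¹ := by
  unfold cm
  rw [← Matrix.coe_units_inv]
  norm_cast

lemma exists_cm {u : Matrix (Fin n) (Fin n) F} (hu : u ∈ patternU J) :
    ∃ x : GT F J hΦ hcl, cm x = u := by
  refine ⟨⟨⟨u, u⁻¹, U_mul_inv_self J hΦ hu, U_inv_mul_self J hΦ hu⟩, ?_⟩, rfl⟩
  rw [UGrp_mem_iff J hΦ hcl]
  exact hu

lemma card_GT : (Fintype.card (GT F J hΦ hcl) : ℂ) = ((patternV (F := F) J).toFinset.card : ℂ) := by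
  norm_cast
  rw [← Finset.card_univ]
  apply Finset.card_bij (fun x _ => cm x - 1)
  · intro a _
    rw [Set.mem_toFinset]
    exact sub_one_mem_V J (cm_mem J hΦ hcl a)
  · intro a _ b _ hab
    have : cm a = cm b := by
      have := congrArg (· + (1 : Matrix (Fin n) (Fin n) F)) hab
      simpa using this
    apply Subtype.ext; apply Units.ext; exact this
  · intro b hb
    rw [Set.mem_toFinset] at hb
    obtain ⟨x, hx⟩ := exists_cm J hΦ hcl (one_add_mem_U J hΦ hb)
    exact ⟨x, Finset.mem_univ x, by rw [hx]; abel⟩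

lemma Mprime (θ : AddChar F ℂ) (hθ : θ ≠ 1)
    {g : Matrix (Fin n) (Fin n) F} (hg : g ∈ patternU J)
    {C : Matrix (Fin n) (Fin n) F} (hC : C ∈ patternV J) :
    ∑ u : GT F J hΦ hcl, θ (dpair C (cm u * (g - 1)))
      = if projJ J (C * (g⁻¹)ᵀ) = C
        then ((patternV (F := F) J).toFinset.card : ℂ) * θ (dpair C (g - 1)) else 0 := by
  set Vfin := (patternV (F := F) J).toFinset with hVfin
  have step1 : ∑ u : GT F J hΦ hcl, θ (dpair C (cm u * (g - 1)))
      = ∑ a ∈ Vfin, θ (dpair C ((1 + a) * (g - 1))) := by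
    apply Finset.sum_nbij (i := fun u => cm u - 1)
    · intro a _
      rw [hVfin, Set.mem_toFinset]
      exact sub_one_mem_V J (cm_mem J hΦ hcl a)
    · intro a _ b _ hab
      simp only at hab
      have : cm a = cm b := by
        have := congrArg (· + (1 : Matrix (Fin n) (Fin n) F)) hab
        simpa using this
      exact Subtype.ext (Units.ext this)
    · intro b hb
      simp only [Finset.coe_univ, Set.image_univ, Set.mem_range]
      rw [hVfin, Finset.mem_coe, Set.mem_toFinset] at hb
      obtain ⟨x, hx⟩ := exists_cm J hΦ hcl (one_add_mem_U J hΦ hb)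
      exact ⟨x, by rw [hx]; abel⟩
    · intro u _
      have : (1 : Matrix (Fin n) (Fin n) F) + (cm u - 1) = cm u := by abel
      rw [this]
  have step2 : ∑ a ∈ Vfin, θ (dpair C ((1 + a) * (g - 1)))
      = θ (dpair C (g - 1)) * ∑ a ∈ Vfin, θ (dpair C (a * (g - 1))) := by
    rw [Finset.mul_sum]
    refine Finset.sum_congr rfl fun a _ => ?_
    have e : (1 + a) * (g - 1) = (g - 1) + a * (g - 1) := by noncomm_ring
    rw [e, dpair_add_right, AddChar.map_add_eq_mul]
  rw [step1, step2]
  by_cases hfix : projJ J (C * (g⁻¹)ᵀ) = C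
  · rw [if_pos hfix]
    have hzero := (fixR_iff J hΦ hcl hg hC).mp hfix
    have : ∑ a ∈ Vfin, θ (dpair C (a * (g - 1))) = (Vfin.card : ℂ) := by
      rw [Finset.sum_congr rfl fun a ha => ?_, Finset.sum_const, nsmul_eq_mul, mul_one]
      rw [hzero a (by rwa [hVfin, Set.mem_toFinset] at ha), AddChar.map_zero_eq_one]
    rw [this]
    ring
  · rw [if_neg hfix]
    have hnz : ∃ a ∈ patternV (F := F) J, dpair C (a * (g - 1)) ≠ 0 := by
      by_contra hcon
      push_neg at hcon
      exact hfix ((fixR_iff J hΦ hcl hg hC).mpr hcon)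
    have hcs := charSum J θ hθ (fun a => dpair C (a * (g - 1)))
      (fun a b => by
        show dpair C ((a + b) * (g - 1)) = dpair C (a * (g - 1)) + dpair C (b * (g - 1))
        rw [add_mul, dpair_add_right])
      (fun c a => by
        show dpair C ((c • a) * (g - 1)) = c * dpair C (a * (g - 1))
        rw [smul_mul_assoc, dpair_smul_right])
      hnz
    rw [hVfin, hcs]
    ring

lemma cm_inv_inv (x : GT F J hΦ hcl) : (cm x⁻¹)⁻¹ = cm x := by
  rw [← cm_inv J hΦ hcl x⁻¹, inv_inv]


end grp
end SC

open SC in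
/-- Supercharacter formula.  For J ⊆ Φ⁺ closed, A ∈ V_J, let χ_A be the
supercharacter of U_J afforded by the right orbit module ℂO_{−A}^r.  If g ∈ U_J lies in the
superclass K = E + U_J.(g−E).U_J, then
χ_A(g) = (|[A].U_J|/|U_J.[A].U_J|)·Σ_{[B]∈U_J.[A].U_J} [B](f(g))
       = (|[A].U_J|/|K|)·Σ_{h∈K} [A](f(h)),  f(h) = h − E.
Divisions are cleared by multiplying through by the cardinalities. -/
theorem stmt_14 {F : Type} [Field F] [Fintype F] {n : ℕ}
    (J : Set (Fin n × Fin n))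
    (hΦ : ∀ p ∈ J, p.1 < p.2)
    (hcl : ∀ i j k : Fin n, (i, j) ∈ J → (j, k) ∈ J → (i, k) ∈ J)
    (θ : AddChar F ℂ) (hθ : θ ≠ 1)
    (A : Matrix (Fin n) (Fin n) F) (hA : A ∈ patternV J)
    (g : Matrix (Fin n) (Fin n) F) (hg : g ∈ patternU J)
    (K : Set (Matrix (Fin n) (Fin n) F))
    (hK : K = {h | ∃ u ∈ patternU J, ∃ v ∈ patternU J, h = 1 + u * (g - 1) * v}) :
    rcharFn J θ (-A) g * (Nat.card ↥(orbBi J A) : ℂ) =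
        (Nat.card ↥(orbR J A) : ℂ) * (∑ᶠ B ∈ orbBi J A, θ (dpair B (g - 1))) ∧
    rcharFn J θ (-A) g * (Nat.card ↥K : ℂ) =
        (Nat.card ↥(orbR J A) : ℂ) * (∑ᶠ h ∈ K, θ (dpair A (h - 1))) := by
  classical
  have hgV : g - 1 ∈ patternV J := sub_one_mem_V J hg
  set Vfin := (patternV (F := F) J).toFinset with hVfin
  set Vc := (Vfin.card : ℂ) with hVc
  have hVcpos : Vc ≠ 0 := by
    rw [hVc]
    have : 0 < Vfin.card := Finset.card_pos.mpr ⟨0, by rw [hVfin, Set.mem_toFinset]; exact V_zero J⟩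
    exact_mod_cast this.ne'
  set φ : Matrix (Fin n) (Fin n) F → ℂ := fun B => θ (dpair B (g - 1)) with hφ
  set Ff : Matrix (Fin n) (Fin n) F → ℂ :=
    fun B => if projJ J (B * (g⁻¹)ᵀ) = B then φ B else 0 with hFf
  set φK : Matrix (Fin n) (Fin n) F → ℂ := fun h => θ (dpair A (h - 1)) with hφK
  set fr : (GT F J hΦ hcl) → Matrix (Fin n) (Fin n) F := fun v => ract J A (cm v) with hfr
  set fbi : (GT F J hΦ hcl) × (GT F J hΦ hcl) → Matrix (Fin n) (Fin n) F :=
    fun p => lact J (cm p.1⁻¹) (ract J A (cm p.2)) with hfbi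
  set fK : (GT F J hΦ hcl) × (GT F J hΦ hcl) → Matrix (Fin n) (Fin n) F :=
    fun p => 1 + cm p.1⁻¹ * (g - 1) * cm p.2 with hfK
  set S : ℂ := ∑ p : (GT F J hΦ hcl) × (GT F J hΦ hcl), φ (fbi p) with hS
  -- E1
  have E1 : ∀ p : (GT F J hΦ hcl) × (GT F J hΦ hcl), φ (fbi p) = θ (dpair A (cm p.1 * (g - 1) * (cm p.2)⁻¹)) := by
    intro p
    rw [hφ, hfbi]
    simp only
    rw [dpair_lact J _ _ hgV, cm_inv_inv J hΦ hcl,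
      dpair_ract J _ _ (U_mul_V J hΦ hcl hgV (cm_mem J hΦ hcl p.1))]
  -- Efbi and equivariance of fbi
  have Efbi : ∀ p r : (GT F J hΦ hcl) × (GT F J hΦ hcl), fbi (p * r) = lact J (cm r.1⁻¹) (ract J (fbi p) (cm r.2)) := by
    intro p r
    rw [hfbi]
    simp only
    have h1 : (p * r).1⁻¹ = r.1⁻¹ * p.1⁻¹ := by
      have : (p * r).1 = p.1 * r.1 := rfl
      rw [this, _root_.mul_inv_rev]
    have h2 : (p * r).2 = p.2 * r.2 := rfl
    rw [h1, h2, cm_mul, cm_mul,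
      ← ract_ract J hΦ hcl A (cm_mem J hΦ hcl p.2) (cm_mem J hΦ hcl r.2),
      ← lact_lact J hΦ hcl _ (cm_mem J hΦ hcl r.1⁻¹) (cm_mem J hΦ hcl p.1⁻¹),
      lact_ract_comm J hΦ hcl _ (cm_mem J hΦ hcl p.1⁻¹) (cm_mem J hΦ hcl r.2)]
  have hpropbi : ∀ p q : (GT F J hΦ hcl) × (GT F J hΦ hcl), fbi p = fbi q → ∀ r, fbi (p * r) = fbi (q * r) := by
    intro p q h r
    rw [Efbi, Efbi, h]
  -- equivariance of fr
  have Efr : ∀ x y : (GT F J hΦ hcl), fr (x * y) = ract J (fr x) (cm y) := by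
    intro x y
    rw [hfr]
    simp only
    rw [cm_mul, ← ract_ract J hΦ hcl A (cm_mem J hΦ hcl x) (cm_mem J hΦ hcl y)]
  have hpropr : ∀ p q : (GT F J hΦ hcl), fr p = fr q → ∀ r, fr (p * r) = fr (q * r) := by
    intro p q h r
    rw [Efr, Efr, h]
  -- S = Vc * ∑ v, Ff (fr v)
  have Sval : S = Vc * ∑ v : (GT F J hΦ hcl), Ff (fr v) := by
    rw [hS, Fintype.sum_prod_type_right, Finset.mul_sum]
    refine Finset.sum_congr rfl fun v _ => ?_
    have inner : ∀ u : (GT F J hΦ hcl), φ (fbi (u, v)) = θ (dpair (ract J A (cm v)) (cm u * (g - 1))) := by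
      intro u
      rw [hφ, hfbi]
      simp only
      rw [dpair_lact J _ _ hgV, cm_inv_inv J hΦ hcl]
    calc ∑ u : (GT F J hΦ hcl), φ (fbi (u, v))
        = ∑ u : (GT F J hΦ hcl), θ (dpair (ract J A (cm v)) (cm u * (g - 1))) :=
          Finset.sum_congr rfl fun u _ => inner u
      _ = if projJ J ((ract J A (cm v)) * (g⁻¹)ᵀ) = ract J A (cm v)
            then Vc * θ (dpair (ract J A (cm v)) (g - 1)) else 0 :=
          Mprime J hΦ hcl θ hθ hg (ract_mem J A (cm v))
      _ = Vc * Ff (fr v) := by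
          rw [hFf, hfr, hφ]
          simp only
          split_ifs with h
          · rfl
          · ring
  -- image identifications
  have imgR : Finset.image fr Finset.univ = (orbR J A).toFinset := by
    ext b
    simp only [Finset.mem_image, Finset.mem_univ, true_and, Set.mem_toFinset]
    constructor
    · rintro ⟨v, rfl⟩
      exact ⟨cm v, cm_mem J hΦ hcl v, rfl⟩
    · rintro ⟨u, hu, rfl⟩
      obtain ⟨x, hx⟩ := exists_cm J hΦ hcl hu
      exact ⟨x, by rw [hfr]; simp only; rw [hx]; rfl⟩
  have imgBi : Finset.image fbi Finset.univ = (orbBi J A).toFinset := by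
    ext b
    simp only [Finset.mem_image, Finset.mem_univ, true_and, Set.mem_toFinset]
    constructor
    · rintro ⟨p, rfl⟩
      exact ⟨cm p.1⁻¹, cm_mem J hΦ hcl _, cm p.2, cm_mem J hΦ hcl _, rfl⟩
    · rintro ⟨u, hu, v, hv, rfl⟩
      obtain ⟨x, hx⟩ := exists_cm J hΦ hcl hu
      obtain ⟨y, hy⟩ := exists_cm J hΦ hcl hv
      refine ⟨(x⁻¹, y), ?_⟩
      rw [hfbi]
      simp only
      rw [inv_inv, hx, hy]
      rfl
  -- H2
  have H2 : S * (((orbR J A).toFinset.card : ℕ) : ℂ)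
      = Vc ^ 2 * ∑ b ∈ (orbR J A).toFinset, Ff b := by
    have hcf := const_fiber fr Ff hpropr
    rw [imgR, card_GT J hΦ hcl, ← hVfin, ← hVc] at hcf
    rw [Sval]
    calc Vc * (∑ v : (GT F J hΦ hcl), Ff (fr v)) * (((orbR J A).toFinset.card : ℕ) : ℂ)
        = Vc * ((((orbR J A).toFinset.card : ℕ) : ℂ) * ∑ v : (GT F J hΦ hcl), Ff (fr v)) := by ring
      _ = Vc * (Vc * ∑ b ∈ (orbR J A).toFinset, Ff b) := by rw [hcf]
      _ = Vc ^ 2 * ∑ b ∈ (orbR J A).toFinset, Ff b := by ring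
  -- H3
  have H3 : (((orbBi J A).toFinset.card : ℕ) : ℂ) * S
      = Vc ^ 2 * ∑ b ∈ (orbBi J A).toFinset, φ b := by
    have hcf := const_fiber fbi φ hpropbi
    rw [imgBi] at hcf
    have hcard : (Fintype.card ((GT F J hΦ hcl) × (GT F J hΦ hcl)) : ℂ) = Vc ^ 2 := by
      rw [Fintype.card_prod]
      push_cast
      rw [card_GT J hΦ hcl, ← hVfin, ← hVc]
      ring
    rw [hcard] at hcf
    rw [hS]
    exact hcf
  -- K-side
  have EfK : ∀ p r : (GT F J hΦ hcl) × (GT F J hΦ hcl), fK (p * r) = 1 + cm r.1⁻¹ * (fK p - 1) * cm r.2 := by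
    intro p r
    rw [hfK]
    simp only
    rw [add_sub_cancel_left]
    have h1 : (p * r).1⁻¹ = r.1⁻¹ * p.1⁻¹ := by
      have : (p * r).1 = p.1 * r.1 := rfl
      rw [this, _root_.mul_inv_rev]
    have h2 : (p * r).2 = p.2 * r.2 := rfl
    rw [h1, h2, cm_mul, cm_mul]
    noncomm_ring
  have hpropK : ∀ p q : (GT F J hΦ hcl) × (GT F J hΦ hcl), fK p = fK q → ∀ r, fK (p * r) = fK (q * r) := by
    intro p q h r
    rw [EfK, EfK, h]
  have EK : ∀ p : (GT F J hΦ hcl) × (GT F J hΦ hcl), φK (fK p) = φ (fbi (p.1⁻¹, p.2⁻¹)) := by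
    intro p
    rw [E1 (p.1⁻¹, p.2⁻¹)]
    simp only
    rw [cm_inv_inv J hΦ hcl p.2, hφK, hfK]
    simp only
    rw [add_sub_cancel_left]
  have SK : S = ∑ p : (GT F J hΦ hcl) × (GT F J hΦ hcl), φK (fK p) := by
    rw [hS]
    refine (Fintype.sum_equiv (Equiv.prodCongr (Equiv.inv (GT F J hΦ hcl)) (Equiv.inv (GT F J hΦ hcl))) _ _ fun p => ?_).symm
    exact EK p
  have imgK : Finset.image fK Finset.univ = K.toFinset := by
    ext b
    simp only [Finset.mem_image, Finset.mem_univ, true_and, Set.mem_toFinset, hK,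
      Set.mem_setOf_eq]
    constructor
    · rintro ⟨p, rfl⟩
      exact ⟨cm p.1⁻¹, cm_mem J hΦ hcl _, cm p.2, cm_mem J hΦ hcl _, rfl⟩
    · rintro ⟨u, hu, v, hv, rfl⟩
      obtain ⟨x, hx⟩ := exists_cm J hΦ hcl hu
      obtain ⟨y, hy⟩ := exists_cm J hΦ hcl hv
      refine ⟨(x⁻¹, y), ?_⟩
      rw [hfK]
      simp only
      rw [inv_inv, hx, hy]
  have H4 : ((K.toFinset.card : ℕ) : ℂ) * S = Vc ^ 2 * ∑ h ∈ K.toFinset, φK h := by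
    have hcf := const_fiber fK φK hpropK
    rw [imgK] at hcf
    have hcard : (Fintype.card ((GT F J hΦ hcl) × (GT F J hΦ hcl)) : ℂ) = Vc ^ 2 := by
      rw [Fintype.card_prod]
      push_cast
      rw [card_GT J hΦ hcl, ← hVfin, ← hVc]
      ring
    rw [hcard] at hcf
    rw [SK]
    exact hcf
  -- H1 : rcharFn equals T
  have horbneg : orbR J (-A) = (fun B : Matrix (Fin n) (Fin n) F => -B) '' (orbR J A) := by
    ext B
    simp only [orbR, Set.mem_setOf_eq, Set.mem_image]
    constructor
    · rintro ⟨u, hu, rfl⟩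
      exact ⟨projJ J (A * (u⁻¹)ᵀ), ⟨u, hu, rfl⟩, by rw [← projJ_neg, neg_mul]⟩
    · rintro ⟨C, ⟨u, hu, rfl⟩, rfl⟩
      exact ⟨u, hu, by rw [neg_mul, projJ_neg]⟩
  have H1 : rcharFn J θ (-A) g = ∑ b ∈ (orbR J A).toFinset, Ff b := by
    rw [rcharFn, horbneg]
    rw [finsum_mem_image (fun x _ y _ h => neg_injective h)]
    have hc0 := finsum_mem_coe_finset (s := (orbR J A).toFinset)
      (f := fun C => if projJ J (-C * (g⁻¹)ᵀ) = -C then θ (dpair (-C) (g⁻¹ - 1)) else 0)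
    rw [Set.coe_toFinset] at hc0
    rw [hc0]
    refine Finset.sum_congr rfl fun C hC => ?_
    rw [Set.mem_toFinset] at hC
    obtain ⟨u, hu, hCe⟩ := hC
    have hCV : C ∈ patternV J := by rw [hCe]; exact projJ_mem J _
    have hcond : (projJ J (-C * (g⁻¹)ᵀ) = -C) ↔ (projJ J (C * (g⁻¹)ᵀ) = C) := by
      rw [neg_mul, projJ_neg, neg_inj]
    by_cases hfix : projJ J (C * (g⁻¹)ᵀ) = C
    · rw [if_pos (hcond.mpr hfix), hFf]
      simp only
      rw [if_pos hfix, hφ]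
      have hgi : g * g⁻¹ = 1 := U_mul_inv_self J hΦ hg
      have e2 : g⁻¹ - 1 = -((g - 1) * g⁻¹) := by
        have h5 : (g - 1) * g⁻¹ = 1 - g⁻¹ := by rw [sub_mul, one_mul, hgi]
        rw [h5]
        abel
      have e3 : dpair C ((g - 1) * g⁻¹) = dpair C (g - 1) :=
        fix_key J hΦ hfix (g - 1) hgV
      rw [dpair_neg_left, e2, dpair_neg_right, e3, neg_neg]
    · rw [if_neg (fun hcon => hfix (hcond.mp hcon)), hFf]
      simp only
      rw [if_neg hfix]
  -- cardinal and finsum conversions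
  have hNbi : ((Nat.card ↥(orbBi J A) : ℕ) : ℂ) = (((orbBi J A).toFinset.card : ℕ) : ℂ) := by
    rw [Nat.card_coe_set_eq, Set.ncard_eq_toFinset_card']
  have hNr : ((Nat.card ↥(orbR J A) : ℕ) : ℂ) = (((orbR J A).toFinset.card : ℕ) : ℂ) := by
    rw [Nat.card_coe_set_eq, Set.ncard_eq_toFinset_card']
  have hNk : ((Nat.card ↥K : ℕ) : ℂ) = ((K.toFinset.card : ℕ) : ℂ) := by
    rw [Nat.card_coe_set_eq, Set.ncard_eq_toFinset_card']
  have hfinbi : ∑ᶠ B ∈ orbBi J A, θ (dpair B (g - 1)) = ∑ b ∈ (orbBi J A).toFinset, φ b := by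
    have hc0 := finsum_mem_coe_finset (s := (orbBi J A).toFinset) (f := φ)
    rw [Set.coe_toFinset] at hc0
    rw [← hc0]
  have hfinK : ∑ᶠ h ∈ K, θ (dpair A (h - 1)) = ∑ h ∈ K.toFinset, φK h := by
    have hc0 := finsum_mem_coe_finset (s := K.toFinset) (f := φK)
    rw [Set.coe_toFinset] at hc0
    rw [← hc0]
  constructor
  · rw [H1, hNbi, hNr, hfinbi]
    refine mul_left_cancel₀ (pow_ne_zero 2 hVcpos) ?_
    calc Vc ^ 2 * ((∑ b ∈ (orbR J A).toFinset, Ff b) * (((orbBi J A).toFinset.card : ℕ) : ℂ))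
        = (Vc ^ 2 * ∑ b ∈ (orbR J A).toFinset, Ff b) * (((orbBi J A).toFinset.card : ℕ) : ℂ) := by
          ring
      _ = (S * (((orbR J A).toFinset.card : ℕ) : ℂ)) * (((orbBi J A).toFinset.card : ℕ) : ℂ) := by
          rw [← H2]
      _ = (((orbR J A).toFinset.card : ℕ) : ℂ) * ((((orbBi J A).toFinset.card : ℕ) : ℂ) * S) := by
          ring
      _ = (((orbR J A).toFinset.card : ℕ) : ℂ) * (Vc ^ 2 * ∑ b ∈ (orbBi J A).toFinset, φ b) := by
          rw [H3]
      _ = Vc ^ 2 * ((((orbR J A).toFinset.card : ℕ) : ℂ) * ∑ b ∈ (orbBi J A).toFinset, φ b) := by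
          ring
  · rw [H1, hNk, hNr, hfinK]
    refine mul_left_cancel₀ (pow_ne_zero 2 hVcpos) ?_
    calc Vc ^ 2 * ((∑ b ∈ (orbR J A).toFinset, Ff b) * ((K.toFinset.card : ℕ) : ℂ))
        = (Vc ^ 2 * ∑ b ∈ (orbR J A).toFinset, Ff b) * ((K.toFinset.card : ℕ) : ℂ) := by
          ring
      _ = (S * (((orbR J A).toFinset.card : ℕ) : ℂ)) * ((K.toFinset.card : ℕ) : ℂ) := by
          rw [← H2]
      _ = (((orbR J A).toFinset.card : ℕ) : ℂ) * (((K.toFinset.card : ℕ) : ℂ) * S) := by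
          ring
      _ = (((orbR J A).toFinset.card : ℕ) : ℂ) * (Vc ^ 2 * ∑ h ∈ K.toFinset, φK h) := by
          rw [H4]
      _ = Vc ^ 2 * ((((orbR J A).toFinset.card : ℕ) : ℂ) * ∑ h ∈ K.toFinset, φK h) := by
          ring
end
end
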